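/- arXiv:2209.07633 — 8 statements merged into one kernel-verified Lean document; each statement's English description precedes it below -/
import Mathlib

section
/- Let r be a natural number with r ≥ 1 and let n = 2r. Then the maximal dimension of a nonempty affine subspace of the space A(n,ℝ) of antisymmetric n×n real matrices all of whose elements have rank 2r equals r(r−1). That is: there exists a nonempty affine subspace S of A(2r,ℝ) of dimension r(r−1) such that every matrix in S has rank 2r, and every nonempty affine subspace S of A(2r,ℝ) with all elements of rank 2r has dimension at most r(r−1). -/
/-!
Let `A₀` be an invertible antisymmetric matrix of the affine space and write it in polar form
`A₀ = K P`, with `K` antisymmetric, `K² = -1`, and `P` positive definite. If a nonzero direction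
`B` commuted with `K`, then `K B` would be symmetric, so `K B x = t P x` for some real `t ≠ 0` and
`x ≠ 0`, and `t⁻¹ B + A₀` would be singular. So the direction meets the commutant of `K` only in
`0`, and the projection onto the antisymmetric matrices anticommuting with `K` is injective on it.
That space has dimension `(n² - 2n) / 4 = r (r - 1)`, the trace of the projection. Conversely
`(K + B)ᵀ (K + B) = 1 + Bᵀ B` for every antisymmetric `B` anticommuting with `K`, so `K` plus
that space is an affine space of invertible matrices attaining the bound.
-/

open Matrix

section Trace

variable {m R : Type*} [Fintype m] [DecidableEq m] [CommRing R]

theorem trace_eq_sum_single (f : Matrix m m R →ₗ[R] Matrix m m R) :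
    LinearMap.trace R _ f = ∑ i, ∑ j, f (single i j 1) i j := by
  rw [LinearMap.trace_eq_matrix_trace R (stdBasis R m m), Matrix.trace, Fintype.sum_prod_type]
  simp only [diag_apply, LinearMap.toMatrix_apply, stdBasis_eq_single]
  rfl

theorem trace_transposeLinearEquiv :
    LinearMap.trace R _ (transposeLinearEquiv m m R R).toLinearMap = Fintype.card m := by
  rw [trace_eq_sum_single]
  simp [single_apply, ite_and]

theorem trace_mulLeftRight (A B : Matrix m m R) :
    LinearMap.trace R _ (LinearMap.mulLeftRight R (A, B)) = A.trace * B.trace := by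
  rw [trace_eq_sum_single, Matrix.trace, Matrix.trace, Finset.sum_mul_sum]
  simp [Matrix.mul_apply, single_apply, ite_and]

theorem trace_mulLeftRight_comp_transpose (A B : Matrix m m R) :
    LinearMap.trace R _ (LinearMap.mulLeftRight R (A, B) ∘ₗ
      (transposeLinearEquiv m m R R).toLinearMap) = (A * Bᵀ).trace := by
  rw [trace_eq_sum_single, Matrix.trace]
  simp [Matrix.mul_apply, single_apply, ite_and]

end Trace

section SkewAnticommutant

variable {m R : Type*} [Fintype m] [DecidableEq m] [Field R]

def skewAnticommutant (K : Matrix m m R) : Submodule R (Matrix m m R) where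
  carrier := {B | Bᵀ = -B ∧ K * B = -(B * K)}
  add_mem' := by
    rintro A B ⟨hA, hKA⟩ ⟨hB, hKB⟩
    exact ⟨by rw [transpose_add, hA, hB, neg_add],
      by rw [Matrix.mul_add, Matrix.add_mul, hKA, hKB, neg_add]⟩
  zero_mem' := by simp
  smul_mem' := by
    rintro c B ⟨hB, hKB⟩
    exact ⟨by rw [transpose_smul, hB, smul_neg],
      by rw [Matrix.mul_smul, Matrix.smul_mul, hKB, smul_neg]⟩

/-- `¼ (1 - T) (1 + C)` for the transpose `T` and `C X = K X K`: when `K² = -1`, `(1 - T) / 2` and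
`(1 + C) / 2` are commuting idempotents onto the antisymmetric and the `K`-anticommuting
matrices. -/
def skewAnticommutantProj (K : Matrix m m R) : Matrix m m R →ₗ[R] Matrix m m R :=
  let T := (transposeLinearEquiv m m R R).toLinearMap
  let C := LinearMap.mulLeftRight R (K, K)
  (4⁻¹ : R) • (LinearMap.id - T + C - C ∘ₗ T)

theorem skewAnticommutantProj_apply (K X : Matrix m m R) :
    skewAnticommutantProj K X = (4⁻¹ : R) • (X - Xᵀ + K * X * K - K * Xᵀ * K) := by
  simp [skewAnticommutantProj]

variable [CharZero R] {K : Matrix m m R}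

theorem isProj_skewAnticommutantProj (hK : Kᵀ = -K) (hK2 : K * K = -1) :
    LinearMap.IsProj (skewAnticommutant K) (skewAnticommutantProj K) := by
  have hKK (Z : Matrix m m R) : K * (K * Z) = -Z := by
    rw [← Matrix.mul_assoc, hK2, Matrix.neg_mul, Matrix.one_mul]
  refine ⟨fun X ↦ ?_, fun B ⟨hB, hKB⟩ ↦ ?_⟩
  · rw [skewAnticommutantProj_apply]
    refine Submodule.smul_mem _ _ ⟨?_, ?_⟩
    · simp only [transpose_sub, transpose_add, transpose_mul, transpose_transpose, hK,
        Matrix.neg_mul, Matrix.mul_neg, neg_neg, Matrix.mul_assoc]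
      abel
    · simp only [Matrix.mul_sub, Matrix.sub_mul, Matrix.mul_add, Matrix.add_mul,
        Matrix.mul_assoc, hKK, hK2, Matrix.mul_neg, Matrix.mul_one, neg_sub]
      abel
  · have hKBK : K * B * K = B := by
      rw [hKB, Matrix.neg_mul, Matrix.mul_assoc, hK2, Matrix.mul_neg, Matrix.mul_one, neg_neg]
    rw [skewAnticommutantProj_apply, hB, Matrix.mul_neg, Matrix.neg_mul, hKBK]
    module

theorem commute_of_skewAnticommutantProj_eq_zero (hK2 : K * K = -1) {B : Matrix m m R}
    (hB : Bᵀ = -B) (h : skewAnticommutantProj K B = 0) : K * B = B * K := by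
  rw [skewAnticommutantProj_apply, hB, smul_eq_zero_iff_right (by norm_num)] at h
  have hKBK : K * B * K = -B := by
    have h2 : (2 : R) • (K * B * K + B) = 0 := by
      rw [← h, Matrix.mul_neg, Matrix.neg_mul, two_smul]
      abel
    exact eq_neg_of_add_eq_zero_left ((smul_eq_zero_iff_right two_ne_zero).mp h2)
  calc K * B = -(K * B * K * K) := by rw [Matrix.mul_assoc _ K K, hK2]; simp
    _ = B * K := by rw [hKBK, Matrix.neg_mul, neg_neg]

theorem finrank_skewAnticommutant (hK : Kᵀ = -K) (hK2 : K * K = -1) :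
    4 * Module.finrank R (skewAnticommutant K) + 2 * Fintype.card m
      = Fintype.card m * Fintype.card m := by
  have htrK : K.trace = 0 := by
    have := trace_transpose K
    rw [hK, trace_neg] at this
    linear_combination (-2⁻¹ : R) * this
  have h := (isProj_skewAnticommutantProj hK hK2).trace
  rw [skewAnticommutantProj, LinearMap.map_smul, map_sub, map_add, map_sub, LinearMap.trace_id,
    trace_transposeLinearEquiv, trace_mulLeftRight, trace_mulLeftRight_comp_transpose, hK,
    Matrix.mul_neg, hK2, neg_neg, trace_one, htrK, Module.finrank_matrix, Module.finrank_self,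
    smul_eq_mul] at h
  exact_mod_cast (by push_cast at h ⊢; linear_combination (-4 : R) * h :
    ((4 * Module.finrank R (skewAnticommutant K) + 2 * Fintype.card m : ℕ) : R)
      = (Fintype.card m * Fintype.card m : ℕ))

theorem finrank_le_finrank_skewAnticommutant (hK : Kᵀ = -K) (hK2 : K * K = -1)
    (V : Submodule R (Matrix m m R)) (hVskew : ∀ B ∈ V, Bᵀ = -B)
    (hV : ∀ B ∈ V, K * B = B * K → B = 0) :
    Module.finrank R V ≤ Module.finrank R (skewAnticommutant K) := by
  have hproj := isProj_skewAnticommutantProj hK hK2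
  refine LinearMap.finrank_le_finrank_of_injective
    (f := LinearMap.codRestrict _ (skewAnticommutantProj K ∘ₗ V.subtype) fun _ ↦ hproj.map_mem _)
    ((injective_iff_map_eq_zero _).mpr fun B hB ↦ ?_)
  have hB' : skewAnticommutantProj K B = 0 := congrArg Subtype.val hB
  exact Subtype.ext (hV B B.2 (commute_of_skewAnticommutantProj_eq_zero hK2 (hVskew B B.2) hB'))

end SkewAnticommutant

theorem Matrix.isUnit_iff_rank_eq_card {m K : Type*} [Fintype m] [DecidableEq m] [Field K]
    {A : Matrix m m K} : IsUnit A ↔ A.rank = Fintype.card m := by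
  refine ⟨rank_of_isUnit A, fun h ↦ mulVec_surjective_iff_isUnit.mp ?_⟩
  have : LinearMap.range A.mulVecLin = ⊤ :=
    Submodule.eq_top_of_finrank_eq (by rw [← rank, h, Module.finrank_fintype_fun_eq_card])
  exact LinearMap.range_eq_top.mp this

section Real

open scoped MatrixOrder ComplexOrder

variable {m : Type*} [Fintype m] [DecidableEq m]

theorem Matrix.IsHermitian.exists_mulVec_eq_smul_mulVec {𝕜 : Type*} [RCLike 𝕜]
    {C P : Matrix m m 𝕜} (hC : C.IsHermitian) (hC0 : C ≠ 0) (hP : P.PosDef) :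
    ∃ t : ℝ, t ≠ 0 ∧ ∃ x, x ≠ 0 ∧ C *ᵥ x = t • (P *ᵥ x) := by
  set R := CFC.sqrt P
  have hR2 : R * R = P := CFC.sqrt_mul_sqrt_self P hP.posSemidef.nonneg
  have hRh : R.IsHermitian := (CFC.sqrt_nonneg P).posSemidef.isHermitian
  have hRu : IsUnit R.det := (isUnit_iff_isUnit_det R).mp <|
    (CFC.isUnit_sqrt_iff P hP.posSemidef.nonneg).mpr hP.isUnit
  have hCR : R * (R⁻¹ * C * R⁻¹) * R = C := by
    simp only [Matrix.mul_assoc, mul_nonsing_inv_cancel_left _ _ hRu, nonsing_inv_mul _ hRu,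
      Matrix.mul_one]
  have hM : (R⁻¹ * C * R⁻¹).IsHermitian := by
    simpa [hRh.inv.eq] using isHermitian_conjTranspose_mul_mul R⁻¹ hC
  obtain ⟨v, t, ht, hv, hMv⟩ := hM.exists_eigenvector_of_ne_zero
    fun h ↦ hC0 (by rw [← hCR, h, Matrix.mul_zero, Matrix.zero_mul])
  have hRx : R *ᵥ (R⁻¹ *ᵥ v) = v := by
    rw [mulVec_mulVec, mul_nonsing_inv _ hRu, one_mulVec]
  refine ⟨t, ht, R⁻¹ *ᵥ v, fun h ↦ hv (by rw [← hRx, h, mulVec_zero]), ?_⟩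
  calc C *ᵥ (R⁻¹ *ᵥ v) = R *ᵥ ((R⁻¹ * C * R⁻¹) *ᵥ v) := by
        conv_lhs => rw [← hCR]
        simp only [← mulVec_mulVec, hRx]
    _ = t • (P *ᵥ (R⁻¹ *ᵥ v)) := by rw [hMv, mulVec_smul, ← hR2, ← mulVec_mulVec, hRx]

theorem exists_mul_posDef_of_transpose_eq_neg {A : Matrix m m ℝ} (hA : Aᵀ = -A)
    (hAu : IsUnit A) :
    ∃ K P : Matrix m m ℝ, Kᵀ = -K ∧ K * K = -1 ∧ P.PosDef ∧ K * P = A := by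
  set D := Aᵀ * A
  have hDu : IsUnit D := ((isUnit_transpose A).mpr hAu).mul hAu
  have hD : D.PosDef := by
    refine (PosSemidef.posDef_iff_isUnit ?_).mpr hDu
    simpa using posSemidef_conjTranspose_mul_self A
  set P := CFC.sqrt D
  have hP2 : P * P = D := CFC.sqrt_mul_sqrt_self D hD.posSemidef.nonneg
  have hP : P.PosDef := (CFC.sqrt_nonneg D).posSemidef.posDef_iff_isUnit.mpr <|
    (CFC.isUnit_sqrt_iff D hD.posSemidef.nonneg).mpr hDu
  have hPu : IsUnit P.det := (isUnit_iff_isUnit_det P).mp hP.isUnit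
  have hPA : P * A = A * P := by
    have hDA : Commute D A := by
      simp only [D, hA, Commute, SemiconjBy, Matrix.neg_mul, Matrix.mul_neg, Matrix.mul_assoc]
    exact (CFC.sqrt_eq_cfc (a := D) ▸ hDA.cfc_nnreal NNReal.sqrt).eq
  have hPinvA : P⁻¹ * A = A * P⁻¹ := by
    calc P⁻¹ * A = P⁻¹ * (A * P) * P⁻¹ := by
          rw [Matrix.mul_assoc, mul_nonsing_inv_cancel_right _ _ hPu]
      _ = A * P⁻¹ := by rw [← hPA, nonsing_inv_mul_cancel_left _ _ hPu]
  refine ⟨A * P⁻¹, P, ?_, ?_, hP, nonsing_inv_mul_cancel_right _ _ hPu⟩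
  · have hPt : Pᵀ = P := by simpa using hP.isHermitian.eq
    rw [transpose_mul, transpose_nonsing_inv, hPt, hA, Matrix.mul_neg, hPinvA]
  · calc A * P⁻¹ * (A * P⁻¹) = -(D * (P * P)⁻¹) := by
          rw [Matrix.mul_inv_rev, Matrix.mul_assoc, ← Matrix.mul_assoc P⁻¹, hPinvA]
          simp only [D, hA, Matrix.neg_mul, Matrix.mul_assoc, neg_neg]
      _ = -1 := by rw [hP2, mul_nonsing_inv _ ((isUnit_iff_isUnit_det D).mp hDu)]

theorem exists_not_isUnit_smul_add_of_commute {K P B : Matrix m m ℝ} (hK : Kᵀ = -K)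
    (hK2 : K * K = -1) (hP : P.PosDef) (hB : Bᵀ = -B) (hKB : K * B = B * K) (hB0 : B ≠ 0) :
    ∃ c : ℝ, ¬IsUnit (c • B + K * P) := by
  have hKKB : K * (K * B) = -B := by
    rw [← Matrix.mul_assoc, hK2, Matrix.neg_mul, Matrix.one_mul]
  have hC : (K * B).IsHermitian := by
    rw [IsHermitian, conjTranspose_eq_transpose_of_trivial, transpose_mul, hB, hK,
      neg_mul_neg, hKB]
  obtain ⟨t, ht, x, hx, hCx⟩ := hC.exists_mulVec_eq_smul_mulVec
    (fun h ↦ hB0 (by rw [← neg_eq_zero, ← hKKB, h, Matrix.mul_zero])) hP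
  -- multiplying `(K * B) x = t (P x)` by `-K` gives `B x = -t (K P x)`
  have hBx : B *ᵥ x = -(t • ((K * P) *ᵥ x)) := by
    rw [← neg_neg B, ← hKKB, neg_mulVec, ← mulVec_mulVec, hCx, mulVec_smul, mulVec_mulVec]
  refine ⟨t⁻¹, fun hu ↦ hx (mulVec_injective_iff_isUnit.mpr hu ?_)⟩
  rw [mulVec_zero, add_mulVec, smul_mulVec, hBx, smul_neg, smul_smul, inv_mul_cancel₀ ht,
    one_smul, neg_add_cancel]

theorem four_mul_finrank_direction_add_le (S : AffineSubspace ℝ (Matrix m m ℝ))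
    {A : Matrix m m ℝ} (hA : A ∈ S) (hskew : ∀ B ∈ S, Bᵀ = -B) (hunit : ∀ B ∈ S, IsUnit B) :
    4 * Module.finrank ℝ S.direction + 2 * Fintype.card m ≤ Fintype.card m * Fintype.card m := by
  obtain ⟨K, P, hK, hK2, hP, rfl⟩ :=
    exists_mul_posDef_of_transpose_eq_neg (hskew _ hA) (hunit _ hA)
  have hmem (B : Matrix m m ℝ) (hB : B ∈ S.direction) (c : ℝ) : c • B + K * P ∈ S :=
    AffineSubspace.vadd_mem_of_mem_direction (S.direction.smul_mem c hB) hA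
  have hVskew (B : Matrix m m ℝ) (hB : B ∈ S.direction) : Bᵀ = -B := by
    have := hskew _ (hmem B hB 1)
    rwa [one_smul, transpose_add, hskew _ hA, neg_add, add_left_inj] at this
  have hV (B : Matrix m m ℝ) (hB : B ∈ S.direction) (hKB : K * B = B * K) : B = 0 := by
    by_contra hB0
    obtain ⟨c, hc⟩ := exists_not_isUnit_smul_add_of_commute hK hK2 hP (hVskew B hB) hKB hB0
    exact hc (hunit _ (hmem B hB c))
  rw [← finrank_skewAnticommutant hK hK2]
  gcongr
  exact finrank_le_finrank_skewAnticommutant hK hK2 _ hVskew hV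

theorem isUnit_add_of_mem_skewAnticommutant {K B : Matrix m m ℝ} (hK : Kᵀ = -K)
    (hK2 : K * K = -1) (hB : B ∈ skewAnticommutant K) : IsUnit (K + B) := by
  obtain ⟨hBt, hKB⟩ := hB
  have hgram : (K + B)ᵀ * (K + B) = 1 + Bᴴ * B := by
    rw [conjTranspose_eq_transpose_of_trivial, transpose_add, hK, hBt]
    simp only [Matrix.add_mul, Matrix.mul_add, Matrix.neg_mul, hK2, hKB]
    abel
  have hu : IsUnit ((K + B)ᵀ * (K + B)) :=
    hgram ▸ (PosDef.one.add_posSemidef (posSemidef_conjTranspose_mul_self B)).isUnit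
  rw [isUnit_iff_isUnit_det, det_mul, det_transpose] at hu
  exact (isUnit_iff_isUnit_det _).mpr (isUnit_of_mul_isUnit_right hu)

end Real

theorem exists_transpose_eq_neg_mul_self_eq_neg_one (R : Type*) [CommRing R] (r : ℕ) :
    ∃ J : Matrix (Fin (2 * r)) (Fin (2 * r)) R, Jᵀ = -J ∧ J * J = -1 := by
  let e : Fin r ⊕ Fin r ≃ Fin (2 * r) := finSumFinEquiv.trans (finCongr (two_mul r).symm)
  refine ⟨reindexAlgEquiv R R e (fromBlocks 0 1 (-1) 0), ?_, ?_⟩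
  · rw [coe_reindexAlgEquiv, transpose_reindex, ← coe_reindexAlgEquiv R R, ← map_neg]
    congr 1
    rw [fromBlocks_transpose, fromBlocks_neg]
    simp
  · rw [← map_mul, ← map_one (reindexAlgEquiv R R e), ← map_neg]
    congr 1
    rw [fromBlocks_multiply, ← fromBlocks_one, fromBlocks_neg]
    simp

theorem stmt_1_general (r : ℕ) :
    (∃ S : AffineSubspace ℝ (Matrix (Fin (2 * r)) (Fin (2 * r)) ℝ),
      (S : Set (Matrix (Fin (2 * r)) (Fin (2 * r)) ℝ)).Nonempty ∧
      (∀ A ∈ S, Aᵀ = -A) ∧ (∀ A ∈ S, A.rank = 2 * r) ∧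
      Module.finrank ℝ S.direction = r * (r - 1)) ∧
    (∀ S : AffineSubspace ℝ (Matrix (Fin (2 * r)) (Fin (2 * r)) ℝ),
      (S : Set (Matrix (Fin (2 * r)) (Fin (2 * r)) ℝ)).Nonempty →
      (∀ A ∈ S, Aᵀ = -A) → (∀ A ∈ S, A.rank = 2 * r) →
      Module.finrank ℝ S.direction ≤ r * (r - 1)) := by
  have hcard : Fintype.card (Fin (2 * r)) = 2 * r := Fintype.card_fin _
  have hrank (A : Matrix (Fin (2 * r)) (Fin (2 * r)) ℝ) : A.rank = 2 * r ↔ IsUnit A := by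
    rw [isUnit_iff_rank_eq_card, hcard]
  have hsq : 2 * r * (2 * r) = 4 * (r * r) := by ring
  simp only [Nat.mul_sub_one]
  refine ⟨?_, fun S ⟨A, hA⟩ hskew hrankS ↦ ?_⟩
  · obtain ⟨J, hJ, hJ2⟩ := exists_transpose_eq_neg_mul_self_eq_neg_one ℝ r
    have hmem {A} (hA : A ∈ AffineSubspace.mk' J (skewAnticommutant J)) :
        A = J + (A - J) ∧ A - J ∈ skewAnticommutant J :=
      ⟨(add_sub_cancel J A).symm, AffineSubspace.mem_mk'.mp hA⟩
    refine ⟨AffineSubspace.mk' J (skewAnticommutant J), ⟨J, AffineSubspace.self_mem_mk' _ _⟩,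
      fun A hA ↦ ?_, fun A hA ↦ ?_, ?_⟩
    · obtain ⟨hA, hB⟩ := hmem hA
      rw [hA, transpose_add, hJ, hB.1, neg_add]
    · obtain ⟨hA, hB⟩ := hmem hA
      rw [hrank, hA]
      exact isUnit_add_of_mem_skewAnticommutant hJ hJ2 hB
    · have := finrank_skewAnticommutant hJ hJ2
      rw [hcard] at this
      rw [AffineSubspace.direction_mk']
      omega
  · have := four_mul_finrank_direction_add_le S hA hskew fun B hB ↦ (hrank B).mp (hrankS B hB)
    rw [hcard] at this
    omega

/-- For `r ≥ 1` and `n = 2r`, the maximal dimension of a nonempty affine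
subspace of the antisymmetric `2r × 2r` real matrices all of whose elements have rank `2r`
equals `r * (r - 1)`. -/
theorem stmt_1 (r : ℕ) (hr : 1 ≤ r) :
    (∃ S : AffineSubspace ℝ (Matrix (Fin (2 * r)) (Fin (2 * r)) ℝ),
      (S : Set (Matrix (Fin (2 * r)) (Fin (2 * r)) ℝ)).Nonempty ∧
      (∀ A ∈ S, Aᵀ = -A) ∧ (∀ A ∈ S, A.rank = 2 * r) ∧
      Module.finrank ℝ S.direction = r * (r - 1)) ∧
    (∀ S : AffineSubspace ℝ (Matrix (Fin (2 * r)) (Fin (2 * r)) ℝ),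
      (S : Set (Matrix (Fin (2 * r)) (Fin (2 * r)) ℝ)).Nonempty →
      (∀ A ∈ S, Aᵀ = -A) → (∀ A ∈ S, A.rank = 2 * r) →
      Module.finrank ℝ S.direction ≤ r * (r - 1)) :=
  stmt_1_general r
end

section
/- Let n, r be natural numbers with r ≥ 1 and n ≥ 2r. Let A_{i,j}, for 1 ≤ i < j ≤ r, be 2×2 real matrices each of whose second row is zero, and let C be a 2r×(n−2r) real matrix such that every even-indexed row of C is zero (C_{2i,j} = 0 for i = 1,…,r and all j). Then the antisymmetric n×n matrix given in block form by [[J̄_{2r} + R(A_{i,j}), C], [−Cᵀ, 0]] has rank exactly 2r. -/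
/-!
Reorder the indices of `B = J̄ + R(A)` as (even, odd), counting from 0, so that the paper's odd
rows are the even ones here. The odd–odd block of `B` vanishes, because `J` has zero `(2,2)`-entry
and every `A i j` has zero second row; the two off-diagonal blocks are triangular with diagonal
entries `1` and `-1`. Hence `B` is invertible and `B⁻¹` has zero even–even block. Since `C` is
supported on the even rows, the Schur complement `Cᵀ B⁻¹ C` vanishes, and the whole matrix has
the rank of `B`, namely `2r`.
-/

open Matrix

/-- The 2×2 matrix `J = [[0,1],[-1,0]]`. -/
def Jmat : Matrix (Fin 2) (Fin 2) ℝ := !![0, 1; -1, 0]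

/-- The `2r × 2r` block-diagonal matrix with `r` diagonal blocks equal to `J`. -/
def Jbar (r : ℕ) : Matrix (Fin (2 * r)) (Fin (2 * r)) ℝ :=
  Matrix.of fun i j =>
    if (i : ℕ) / 2 = (j : ℕ) / 2 then
      Jmat ⟨(i : ℕ) % 2, by omega⟩ ⟨(j : ℕ) % 2, by omega⟩
    else 0

/-- Given 2×2 matrices `A i j` (used for `i < j`), the antisymmetric `2r × 2r` block matrix
whose `(i,j)`-th 2×2 block is `A i j` for `i < j`, `-(A j i)ᵀ` for `i > j`, and `0` for
`i = j`. -/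
def Rblock {r : ℕ} (A : Fin r → Fin r → Matrix (Fin 2) (Fin 2) ℝ) :
    Matrix (Fin (2 * r)) (Fin (2 * r)) ℝ :=
  Matrix.of fun x y =>
    if h : (x : ℕ) / 2 < (y : ℕ) / 2 then
      A ⟨(x : ℕ) / 2, by have := y.2; omega⟩ ⟨(y : ℕ) / 2, by have := y.2; omega⟩
        ⟨(x : ℕ) % 2, by omega⟩ ⟨(y : ℕ) % 2, by omega⟩
    else if h' : (y : ℕ) / 2 < (x : ℕ) / 2 then
      - A ⟨(y : ℕ) / 2, by have := x.2; omega⟩ ⟨(x : ℕ) / 2, by have := x.2; omega⟩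
          ⟨(y : ℕ) % 2, by omega⟩ ⟨(x : ℕ) % 2, by omega⟩
    else 0

namespace Matrix

variable {m n o p k R K : Type*}

theorem rank_fromBlocks_zero [Fintype m] [Fintype n] [Fintype p] [DecidableEq m] [DecidableEq n]
    [CommRing R] [StrongRankCondition R] (A : Matrix m n R) :
    (fromBlocks A 0 0 (0 : Matrix o p R)).rank = A.rank := by
  apply le_antisymm
  · have h : fromRows (1 : Matrix m m R) (0 : Matrix o m R) * A * fromCols 1 (0 : Matrix n p R) =
        fromBlocks A 0 0 0 := by
      rw [fromRows_mul, fromRows_mul_fromCols]; simp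
    rw [← h]
    exact (rank_mul_le_left _ _).trans (rank_mul_le_right _ _)
  · exact rank_submatrix_le (fromBlocks A 0 0 (0 : Matrix o p R)) Sum.inl Sum.inl

theorem fromBlocks_submatrix_sumMap {m₀ n₀ o₀ p₀ α : Type*} (A : Matrix m n α) (B : Matrix m o α)
    (C : Matrix p n α) (D : Matrix p o α) (f₁ : m₀ → m) (f₂ : p₀ → p) (g₁ : n₀ → n)
    (g₂ : o₀ → o) :
    (fromBlocks A B C D).submatrix (Sum.map f₁ f₂) (Sum.map g₁ g₂) =
      fromBlocks (A.submatrix f₁ g₁) (B.submatrix f₁ g₂) (C.submatrix f₂ g₁)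
        (D.submatrix f₂ g₂) := by
  ext (i | i) (j | j) <;> rfl

theorem rank_fromBlocks_of_schur_eq_zero [Fintype m] [Fintype n] [Fintype o]
    [DecidableEq m] [DecidableEq n] [DecidableEq o] [Field K]
    (A : Matrix m m K) (hA : IsUnit A.det) (B : Matrix m n K) (C : Matrix o m K)
    (D : Matrix o n K) (hD : D = C * A⁻¹ * B) :
    (fromBlocks A B C D).rank = Fintype.card m := by
  let := A.invertibleOfIsUnitDet hA
  rw [fromBlocks_eq_of_invertible₁₁, invOf_eq_nonsing_inv, ← hD, sub_self,
    rank_mul_eq_left_of_isUnit_det _ _ (by simp),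
    rank_mul_eq_right_of_isUnit_det _ _ (by simp),
    rank_fromBlocks_zero, rank_of_isUnit _ ((isUnit_iff_isUnit_det A).2 hA)]

section ZeroCorner

variable [Fintype m] [DecidableEq m] [CommRing R] (S U T : Matrix m m R)
  (hU : IsUnit U.det) (hT : IsUnit T.det)
include hU hT

theorem fromBlocks_zero₂₂_mul_eq_one :
    fromBlocks S U T 0 * fromBlocks 0 T⁻¹ U⁻¹ (-(U⁻¹ * S * T⁻¹)) = 1 := by
  simp [fromBlocks_multiply, mul_nonsing_inv _ hU, mul_nonsing_inv _ hT, ← Matrix.mul_assoc,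
    fromBlocks_one]

theorem inv_fromBlocks_zero₂₂ :
    (fromBlocks S U T 0)⁻¹ = fromBlocks 0 T⁻¹ U⁻¹ (-(U⁻¹ * S * T⁻¹)) :=
  inv_eq_right_inv (fromBlocks_zero₂₂_mul_eq_one S U T hU hT)

theorem isUnit_det_fromBlocks_zero₂₂ : IsUnit (fromBlocks S U T 0).det :=
  isUnit_det_of_right_inverse (fromBlocks_zero₂₂_mul_eq_one S U T hU hT)

end ZeroCorner

theorem rank_fromBlocks_fromBlocks_zero₂₂ [Fintype m] [Fintype k] [DecidableEq m]
    [DecidableEq k] [Field K] (S U T : Matrix m m K) (hU : IsUnit U.det) (hT : IsUnit T.det)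
    (X : Matrix m k K) (Y : Matrix k m K) :
    (fromBlocks (fromBlocks S U T 0) (fromRows X 0) (fromCols Y 0) 0).rank =
      Fintype.card (m ⊕ m) := by
  refine rank_fromBlocks_of_schur_eq_zero _ (isUnit_det_fromBlocks_zero₂₂ S U T hU hT) _ _ _ ?_
  rw [inv_fromBlocks_zero₂₂ S U T hU hT]
  simp [fromCols_mul_fromBlocks, fromCols_mul_fromRows]

end Matrix

def blockIdx {r : ℕ} (i : Fin r) (a : Fin 2) : Fin (2 * r) :=
  ⟨2 * i + a, by omega⟩

section BlockEntries

variable {r : ℕ} (i j : Fin r) (a b : Fin 2)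

theorem blockIdx_div_two : (blockIdx i a : ℕ) / 2 = i := by
  simp only [blockIdx]; omega

theorem blockIdx_mod_two (h : (blockIdx i a : ℕ) % 2 < 2) :
    (⟨(blockIdx i a : ℕ) % 2, h⟩ : Fin 2) = a :=
  Fin.ext (by simp only [blockIdx]; omega)

theorem Jbar_blockIdx :
    Jbar r (blockIdx i a) (blockIdx j b) = if i = j then Jmat a b else 0 := by
  simp only [Jbar, of_apply, blockIdx_div_two, blockIdx_mod_two, Fin.val_inj]

theorem Rblock_blockIdx (A : Fin r → Fin r → Matrix (Fin 2) (Fin 2) ℝ) :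
    Rblock A (blockIdx i a) (blockIdx j b) =
      if i < j then A i j a b else if j < i then -A j i b a else 0 := by
  simp only [Rblock, of_apply, blockIdx_div_two, blockIdx_mod_two, Fin.val_fin_lt, Fin.eta]
  rfl

end BlockEntries

def evenOddEquiv (r : ℕ) : Fin r ⊕ Fin r ≃ Fin (2 * r) where
  toFun := Sum.elim (blockIdx · 0) (blockIdx · 1)
  invFun x := if (x : ℕ) % 2 = 0 then .inl ⟨x / 2, by omega⟩ else .inr ⟨x / 2, by omega⟩
  left_inv := by
    rintro (i | i) <;> simp [blockIdx, Fin.ext_iff]; omega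
  right_inv x := by
    by_cases h : (x : ℕ) % 2 = 0 <;> simp [h, blockIdx, Fin.ext_iff] <;> omega

@[simp]
theorem evenOddEquiv_inl {r : ℕ} (i : Fin r) : evenOddEquiv r (.inl i) = blockIdx i 0 := rfl

@[simp]
theorem evenOddEquiv_inr {r : ℕ} (i : Fin r) : evenOddEquiv r (.inr i) = blockIdx i 1 := rfl

theorem Jbar_add_Rblock_blockIdx_self {r : ℕ} (A : Fin r → Fin r → Matrix (Fin 2) (Fin 2) ℝ)
    (i : Fin r) (a b : Fin 2) :
    (Jbar r + Rblock A) (blockIdx i a) (blockIdx i b) = Jmat a b := by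
  simp [Jbar_blockIdx, Rblock_blockIdx]

section EvenOddBlocks

variable {r : ℕ} {A : Fin r → Fin r → Matrix (Fin 2) (Fin 2) ℝ}
  (hA : ∀ i j : Fin r, i < j → ∀ y : Fin 2, A i j 1 y = 0)
include hA

theorem Jbar_add_Rblock_blockIdx_one_one (i j : Fin r) :
    (Jbar r + Rblock A) (blockIdx i 1) (blockIdx j 1) = 0 := by
  rw [Matrix.add_apply, Jbar_blockIdx, Rblock_blockIdx]
  rcases lt_trichotomy i j with h | rfl | h
  · simp [h, h.ne, hA i j h]
  · simp [Jmat]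
  · simp [h, h.ne', not_lt_of_gt h, hA j i h]

theorem Jbar_add_Rblock_blockIdx_zero_one_of_lt {i j : Fin r} (h : j < i) :
    (Jbar r + Rblock A) (blockIdx i 0) (blockIdx j 1) = 0 := by
  simp [Jbar_blockIdx, Rblock_blockIdx, h, h.ne', not_lt_of_gt h, hA j i h]

theorem Jbar_add_Rblock_blockIdx_one_zero_of_lt {i j : Fin r} (h : i < j) :
    (Jbar r + Rblock A) (blockIdx i 1) (blockIdx j 0) = 0 := by
  simp [Jbar_blockIdx, Rblock_blockIdx, h, h.ne, hA i j h]

end EvenOddBlocks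

theorem Jbar_add_Rblock_submatrix_evenOddEquiv {r : ℕ}
    (A : Fin r → Fin r → Matrix (Fin 2) (Fin 2) ℝ)
    (hA : ∀ i j : Fin r, i < j → ∀ y : Fin 2, A i j 1 y = 0) :
    ∃ S U T : Matrix (Fin r) (Fin r) ℝ, IsUnit U.det ∧ IsUnit T.det ∧
      (Jbar r + Rblock A).submatrix (evenOddEquiv r) (evenOddEquiv r) = fromBlocks S U T 0 := by
  set B := (Jbar r + Rblock A).submatrix (evenOddEquiv r) (evenOddEquiv r)
  refine ⟨B.toBlocks₁₁, B.toBlocks₁₂, B.toBlocks₂₁, ?_, ?_, ?_⟩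
  · have hU : B.toBlocks₁₂.IsUpperTriangular := fun i j h =>
      Jbar_add_Rblock_blockIdx_zero_one_of_lt hA h
    have hdiag (i : Fin r) : B.toBlocks₁₂ i i = 1 :=
      (Jbar_add_Rblock_blockIdx_self A i 0 1).trans (by simp [Jmat])
    simp [det_of_isUpperTriangular hU, hdiag]
  · have hT : B.toBlocks₂₁.IsLowerTriangular := fun i j h =>
      Jbar_add_Rblock_blockIdx_one_zero_of_lt hA h
    have hdiag (i : Fin r) : B.toBlocks₂₁ i i = -1 :=
      (Jbar_add_Rblock_blockIdx_self A i 1 0).trans (by simp [Jmat])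
    simp [det_of_isLowerTriangular _ hT, hdiag]
  · conv_lhs => rw [← fromBlocks_toBlocks B]
    congr
    ext i j
    exact Jbar_add_Rblock_blockIdx_one_one hA i j

/-- if each `A i j` (for `i < j`) has zero second row and every even-indexed
(1-based) row of `C` is zero, then the antisymmetric `n × n` matrix
`[[J̄₂ᵣ + R(A), C], [-Cᵀ, 0]]` has rank exactly `2r`. -/
theorem stmt_3 (n r : ℕ) (hn : 2 * r ≤ n)
    (A : Fin r → Fin r → Matrix (Fin 2) (Fin 2) ℝ)
    (hA : ∀ i j : Fin r, i < j → ∀ y : Fin 2, A i j 1 y = 0)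
    (C : Matrix (Fin (2 * r)) (Fin (n - 2 * r)) ℝ)
    (hC : ∀ (i : Fin r) (j : Fin (n - 2 * r)), C ⟨2 * (i : ℕ) + 1, by have := i.2; omega⟩ j = 0) :
    ((Matrix.fromBlocks (Jbar r + Rblock A) C (-Cᵀ) 0).reindex
        (finSumFinEquiv.trans (finCongr (Nat.add_sub_cancel' hn)))
        (finSumFinEquiv.trans (finCongr (Nat.add_sub_cancel' hn)))).rank = 2 * r := by
  obtain ⟨S, U, T, hU, hT, hB⟩ := Jbar_add_Rblock_submatrix_evenOddEquiv A hA
  set e := evenOddEquiv r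
  have hCrows : C.submatrix e id = fromRows (C.submatrix (e ∘ .inl) id) 0 := by
    ext (i | i) j
    · rfl
    · exact hC i j
  have hCcols : (-Cᵀ).submatrix id e = fromCols ((-Cᵀ).submatrix id (e ∘ .inl)) 0 := by
    ext i (j | j)
    · rfl
    · exact neg_eq_zero.mpr (hC j i)
  rw [rank_reindex, ← rank_submatrix _ (e.sumCongr (.refl _)) (e.sumCongr (.refl _))]
  change (submatrix _ (Sum.map e id) (Sum.map e id)).rank = _
  rw [fromBlocks_submatrix_sumMap, hB, hCrows, hCcols, submatrix_id_id,
    rank_fromBlocks_fromBlocks_zero₂₂ S U T hU hT]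
  simp [two_mul]
end

section
/- Let m, r be positive natural numbers and let V be a linear subspace of ℝ^{3m}. Let π₁ : ℝ^{3m} → ℝ^{2m} be the projection onto the first 2m coordinates, π₂ : ℝ^{3m} → ℝ^{2m} the projection onto the last 2m coordinates (coordinates m+1,…,3m), and π₃ : ℝ^{3m} → ℝ^{2m} the projection onto the coordinates 1,…,m, 2m+1,…,3m. If dim(πᵢ(V)) ≤ 2r for each i = 1,2,3, then dim(V) ≤ 3r. -/
open Matrix

/-- Lemma 2: if `V ≤ ℝ^{3m}` and the projections of `V` onto the first `2m`
coordinates, onto the last `2m` coordinates, and onto the coordinates `1,…,m,2m+1,…,3m`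
all have dimension at most `2r`, then `dim V ≤ 3r`. -/
theorem stmt_5 (m r : ℕ) (hm : 1 ≤ m) (hr : 1 ≤ r)
    (V : Submodule ℝ (Fin (3 * m) → ℝ))
    (h1 : Module.finrank ℝ (V.map (LinearMap.funLeft ℝ ℝ
      (fun i : Fin (2 * m) => (⟨(i : ℕ), by have := i.2; omega⟩ : Fin (3 * m))))) ≤ 2 * r)
    (h2 : Module.finrank ℝ (V.map (LinearMap.funLeft ℝ ℝ
      (fun i : Fin (2 * m) => (⟨(i : ℕ) + m, by have := i.2; omega⟩ : Fin (3 * m))))) ≤ 2 * r)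
    (h3 : Module.finrank ℝ (V.map (LinearMap.funLeft ℝ ℝ
      (fun i : Fin (2 * m) =>
        if (i : ℕ) < m then (⟨(i : ℕ), by have := i.2; omega⟩ : Fin (3 * m))
        else (⟨(i : ℕ) + m, by have := i.2; omega⟩ : Fin (3 * m))))) ≤ 2 * r) :
    Module.finrank ℝ V ≤ 3 * r := by
  classical
  let p1 : (Fin (3*m) → ℝ) →ₗ[ℝ] (Fin (2*m) → ℝ) := LinearMap.funLeft ℝ ℝ
      (fun i : Fin (2 * m) => (⟨(i : ℕ), by have := i.2; omega⟩ : Fin (3 * m)))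
  let p2 : (Fin (3*m) → ℝ) →ₗ[ℝ] (Fin (2*m) → ℝ) := LinearMap.funLeft ℝ ℝ
      (fun i : Fin (2 * m) => (⟨(i : ℕ) + m, by have := i.2; omega⟩ : Fin (3 * m)))
  let p3 : (Fin (3*m) → ℝ) →ₗ[ℝ] (Fin (2*m) → ℝ) := LinearMap.funLeft ℝ ℝ
      (fun i : Fin (2 * m) =>
        if (i : ℕ) < m then (⟨(i : ℕ), by have := i.2; omega⟩ : Fin (3 * m))
        else (⟨(i : ℕ) + m, by have := i.2; omega⟩ : Fin (3 * m)))
  let K1 : Submodule ℝ V := LinearMap.ker (p1 ∘ₗ V.subtype)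
  let K2 : Submodule ℝ V := LinearMap.ker (p2 ∘ₗ V.subtype)
  let K3 : Submodule ℝ V := LinearMap.ker (p3 ∘ₗ V.subtype)
  -- rank-nullity
  have e1 : Module.finrank ℝ (V.map p1) + Module.finrank ℝ K1 = Module.finrank ℝ V := by
    have := LinearMap.finrank_range_add_finrank_ker (p1 ∘ₗ V.subtype)
    rwa [LinearMap.range_comp, Submodule.range_subtype] at this
  have e2 : Module.finrank ℝ (V.map p2) + Module.finrank ℝ K2 = Module.finrank ℝ V := by
    have := LinearMap.finrank_range_add_finrank_ker (p2 ∘ₗ V.subtype)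
    rwa [LinearMap.range_comp, Submodule.range_subtype] at this
  have e3 : Module.finrank ℝ (V.map p3) + Module.finrank ℝ K3 = Module.finrank ℝ V := by
    have := LinearMap.finrank_range_add_finrank_ker (p3 ∘ₗ V.subtype)
    rwa [LinearMap.range_comp, Submodule.range_subtype] at this
  -- vanishing lemmas
  have z1 : ∀ x : V, x ∈ K1 → ∀ j : Fin (3*m), (j:ℕ) < 2*m → (x : Fin (3*m) → ℝ) j = 0 := by
    intro x hx j hj
    have h := LinearMap.mem_ker.mp hx
    have h' := congrFun h (⟨(j:ℕ), hj⟩ : Fin (2*m))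
    simpa [p1, LinearMap.funLeft_apply] using h'
  have z2 : ∀ x : V, x ∈ K2 → ∀ j : Fin (3*m), m ≤ (j:ℕ) → (x : Fin (3*m) → ℝ) j = 0 := by
    intro x hx j hj
    have h := LinearMap.mem_ker.mp hx
    have h' := congrFun h (⟨(j:ℕ) - m, by have := j.2; omega⟩ : Fin (2*m))
    have he : ((⟨(j:ℕ) - m + m, by have := j.2; omega⟩ : Fin (3*m))) = j := by
      ext; simp; omega
    simpa [p2, LinearMap.funLeft_apply, he] using h'
  have z3 : ∀ x : V, x ∈ K3 → ∀ j : Fin (3*m), ((j:ℕ) < m ∨ 2*m ≤ (j:ℕ)) →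
      (x : Fin (3*m) → ℝ) j = 0 := by
    intro x hx j hj
    have h := LinearMap.mem_ker.mp hx
    rcases hj with hj | hj
    · have h' := congrFun h (⟨(j:ℕ), by omega⟩ : Fin (2*m))
      simpa [p3, LinearMap.funLeft_apply, hj] using h'
    · have h' := congrFun h (⟨(j:ℕ) - m, by have := j.2; omega⟩ : Fin (2*m))
      have hlt : ¬ ((j:ℕ) - m < m) := by omega
      have he : ((⟨(j:ℕ) - m + m, by have := j.2; omega⟩ : Fin (3*m))) = j := by
        ext; simp; omega
      simpa [p3, LinearMap.funLeft_apply, hlt, he] using h'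
  -- K1 ⊓ K2 = ⊥
  have d12 : K1 ⊓ K2 = ⊥ := by
    rw [Submodule.eq_bot_iff]
    rintro x ⟨hx1, hx2⟩
    have : (x : Fin (3*m) → ℝ) = 0 := by
      funext j
      rcases lt_or_ge ((j:ℕ)) m with hj | hj
      · exact z1 x hx1 j (by omega)
      · exact z2 x hx2 j hj
    exact Subtype.ext (by simpa using this)
  have d3 : (K1 ⊔ K2) ⊓ K3 = ⊥ := by
    rw [Submodule.eq_bot_iff]
    rintro x ⟨hx12, hx3⟩
    rcases Submodule.mem_sup.mp hx12 with ⟨a, ha, b, hb, hab⟩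
    have : (x : Fin (3*m) → ℝ) = 0 := by
      funext j
      rcases lt_or_ge ((j:ℕ)) m with hj | hj
      · exact z3 x hx3 j (Or.inl hj)
      rcases lt_or_ge ((j:ℕ)) (2*m) with hj2 | hj2
      · have : (x : Fin (3*m) → ℝ) j = (a : Fin (3*m) → ℝ) j + (b : Fin (3*m) → ℝ) j := by
          rw [← hab]; rfl
        rw [this, z1 a ha j hj2, z2 b hb j hj, add_zero]
        rfl
      · exact z3 x hx3 j (Or.inr hj2)
    exact Subtype.ext (by simpa using this)
  -- sum of kernel dims ≤ dim V
  have hker : Module.finrank ℝ K1 + Module.finrank ℝ K2 + Module.finrank ℝ K3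
      ≤ Module.finrank ℝ V := by
    have s12 : Module.finrank ℝ (K1 ⊔ K2 : Submodule ℝ V)
        = Module.finrank ℝ K1 + Module.finrank ℝ K2 := by
      have := Submodule.finrank_sup_add_finrank_inf_eq K1 K2
      rw [d12] at this
      simpa using this
    have s123 : Module.finrank ℝ ((K1 ⊔ K2) ⊔ K3 : Submodule ℝ V)
        = Module.finrank ℝ K1 + Module.finrank ℝ K2 + Module.finrank ℝ K3 := by
      have := Submodule.finrank_sup_add_finrank_inf_eq (K1 ⊔ K2) K3
      rw [d3] at this
      simpa [s12] using this
    rw [← s123]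
    exact Submodule.finrank_le _
  have hh1 : Module.finrank ℝ (V.map p1) ≤ 2 * r := h1
  have hh2 : Module.finrank ℝ (V.map p2) ≤ 2 * r := h2
  have hh3 : Module.finrank ℝ (V.map p3) ≤ 2 * r := h3
  omega
end

section
/- Let m, r, k and n₁,…,n_k, q₁,…,q_k be natural numbers, and set h = 3m + n₁ + … + n_k. Let π₁ : ℝ^h → ℝ^{2m} be the projection onto the first 2m coordinates, π₂ : ℝ^h → ℝ^{2m} the projection onto the coordinates m+1,…,3m, and π₃ : ℝ^h → ℝ^{2m} the projection onto the coordinates 1,…,m, 2m+1,…,3m. For j = 1,…,k let p_j : ℝ^h → ℝ^{n_j} be the projection onto the coordinates 3m + n₁ + … + n_{j−1} + 1, …, 3m + n₁ + … + n_j. If V is a linear subspace of ℝ^h with dim(πᵢ(V)) ≤ 2r for i = 1,2,3 and dim(p_j(V)) ≤ q_j for j = 1,…,k, then dim(V) ≤ 3r + q₁ + … + q_k. -/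
/-!
The dimension `d(S)` of the projection of `V` onto a set `S` of coordinates is submodular,
because the subspaces of `V` vanishing on `A` and on `B` meet in the one vanishing on `A ∪ B`
and span a subspace of the one vanishing on `A ∩ B`. Every one of the first `3m` coordinates is
covered by two of the three projections, so submodularity gives `2 d(first 3m) ≤ 6r`, and
subadditivity over the first `3m` coordinates and the `k` blocks bounds `dim V`.
-/

open Matrix

lemma offset_lt_sum {k : ℕ} (n : Fin k → ℕ) (j : Fin k) (x : ℕ) (hx : x < n j) :
    (∑ i ∈ Finset.univ.filter (fun i : Fin k => i < j), n i) + x < ∑ i, n i := by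
  have hsub : (Finset.univ.filter (fun i : Fin k => i < j)) ⊆ Finset.univ.erase j := by
    intro i hi
    simp only [Finset.mem_filter, Finset.mem_univ, true_and] at hi
    exact Finset.mem_erase.2 ⟨ne_of_lt hi, Finset.mem_univ i⟩
  have h1 : (∑ i ∈ Finset.univ.filter (fun i : Fin k => i < j), n i)
      ≤ ∑ i ∈ Finset.univ.erase j, n i := Finset.sum_le_sum_of_subset hsub
  have h2 : n j + ∑ i ∈ Finset.univ.erase j, n i = ∑ i, n i :=
    Finset.add_sum_erase _ _ (Finset.mem_univ j)
  omega

open Module Set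

namespace Submodule

variable {K ι : Type*} [Field K] (V : Submodule K (ι → K))

noncomputable def projDim (S : Set ι) : ℕ :=
  finrank K (V.map (LinearMap.funLeft K K ((↑) : S → ι)))

def vanishingOn (S : Set ι) : Submodule K V :=
  LinearMap.ker ((LinearMap.funLeft K K ((↑) : S → ι)).domRestrict V)

variable {V}

theorem mem_vanishingOn {S : Set ι} {v : V} :
    v ∈ V.vanishingOn S ↔ ∀ i ∈ S, (v : ι → K) i = 0 := by
  simp [vanishingOn, funext_iff, LinearMap.funLeft_apply]

theorem vanishingOn_union (A B : Set ι) :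
    V.vanishingOn (A ∪ B) = V.vanishingOn A ⊓ V.vanishingOn B := by
  ext v
  simp only [mem_inf, mem_vanishingOn, mem_union, or_imp, forall_and]

theorem vanishingOn_anti {A B : Set ι} (h : A ⊆ B) : V.vanishingOn B ≤ V.vanishingOn A :=
  fun _ hv => mem_vanishingOn.2 fun i hi => mem_vanishingOn.1 hv i (h hi)

theorem vanishingOn_univ : V.vanishingOn univ = ⊥ :=
  eq_bot_iff.2 fun _ hv =>
    (mem_bot K).2 <| Subtype.ext <| funext fun i => mem_vanishingOn.1 hv i trivial

variable (V)

theorem projDim_empty : V.projDim ∅ = 0 :=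
  finrank_zero_of_subsingleton

variable [Fintype ι]

theorem projDim_add_finrank_vanishingOn (S : Set ι) :
    V.projDim S + finrank K (V.vanishingOn S) = finrank K V := by
  rw [projDim, ← LinearMap.range_domRestrict]
  exact LinearMap.finrank_range_add_finrank_ker _

theorem projDim_univ : V.projDim univ = finrank K V := by
  rw [← V.projDim_add_finrank_vanishingOn univ, vanishingOn_univ, finrank_bot, add_zero]

theorem projDim_mono {A B : Set ι} (h : A ⊆ B) : V.projDim A ≤ V.projDim B := by
  have := finrank_mono (vanishingOn_anti (V := V) h)
  have := V.projDim_add_finrank_vanishingOn A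
  have := V.projDim_add_finrank_vanishingOn B
  omega

theorem projDim_union_add_projDim_inter_le (A B : Set ι) :
    V.projDim (A ∪ B) + V.projDim (A ∩ B) ≤ V.projDim A + V.projDim B := by
  have hsup : V.vanishingOn A ⊔ V.vanishingOn B ≤ V.vanishingOn (A ∩ B) :=
    sup_le (vanishingOn_anti inter_subset_left) (vanishingOn_anti inter_subset_right)
  have := finrank_mono hsup
  have := Submodule.finrank_sup_add_finrank_inf_eq (V.vanishingOn A) (V.vanishingOn B)
  have := V.projDim_add_finrank_vanishingOn (A ∪ B)
  have := V.projDim_add_finrank_vanishingOn (A ∩ B)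
  have := V.projDim_add_finrank_vanishingOn A
  have := V.projDim_add_finrank_vanishingOn B
  rw [vanishingOn_union] at *
  omega

theorem projDim_union_le (A B : Set ι) : V.projDim (A ∪ B) ≤ V.projDim A + V.projDim B :=
  (Nat.le_add_right _ _).trans (V.projDim_union_add_projDim_inter_le A B)

theorem projDim_biUnion_le {κ : Type*} (s : Finset κ) (S : κ → Set ι) :
    V.projDim (⋃ i ∈ s, S i) ≤ ∑ i ∈ s, V.projDim (S i) := by
  classical
  induction s using Finset.induction_on with
  | empty => simp [projDim_empty]
  | insert a s ha ih =>
    rw [Finset.set_biUnion_insert, Finset.sum_insert ha]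
    exact (V.projDim_union_le _ _).trans (Nat.add_le_add_left ih _)

theorem projDim_iUnion_le {κ : Type*} [Fintype κ] (S : κ → Set ι) :
    V.projDim (⋃ i, S i) ≤ ∑ i, V.projDim (S i) := by
  simpa using V.projDim_biUnion_le Finset.univ S

theorem projDim_le_finrank_map_funLeft {κ : Type*} {S : Set ι} (e : κ → ι)
    (h : S ⊆ range e) :
    V.projDim S ≤ finrank K (V.map (LinearMap.funLeft K K e)) := by
  refine (V.projDim_mono h).trans_eq ?_
  have hinj : Function.Injective (LinearMap.funLeft K K (rangeFactorization e)) :=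
    LinearMap.funLeft_injective_of_surjective _ _ _ rangeFactorization_surjective
  rw [projDim, (equivMapOfInjective _ hinj _).finrank_eq, ← map_comp, ← LinearMap.funLeft_comp]
  rfl

theorem projDim_two_mul_le {U A B C : Set ι} (hU : U ⊆ A ∩ B ∪ B ∩ C ∪ A ∩ C) :
    2 * V.projDim U ≤ V.projDim A + V.projDim B + V.projDim C := by
  have hAB : U ⊆ A ∪ B := hU.trans (by intro; aesop)
  have hABC : U ⊆ A ∩ B ∪ C := hU.trans (by intro; aesop)
  have := V.projDim_mono hAB
  have := V.projDim_mono hABC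
  have := V.projDim_union_add_projDim_inter_le A B
  have := V.projDim_union_le (A ∩ B) C
  omega

end Submodule

theorem Fin.sum_filter_lt_eq_sum_castLE {k : ℕ} (n : Fin k → ℕ) (j : Fin k) :
    ∑ i ∈ Finset.univ.filter (· < j), n i = ∑ i : Fin j, n (Fin.castLE j.2.le i) := by
  refine Eq.trans ?_ (Finset.sum_map _ (Fin.castLEEmb j.2.le) n)
  congr 1
  ext i
  simp only [Finset.mem_filter, Finset.mem_univ, true_and, Finset.mem_map, Fin.coe_castLEEmb]
  exact ⟨fun h => ⟨⟨i, h⟩, rfl⟩, by rintro ⟨a, rfl⟩; exact a.2⟩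

def blockEmb (a : ℕ) {k : ℕ} (n : Fin k → ℕ) (j : Fin k) (x : Fin (n j)) :
    Fin (a + ∑ j, n j) :=
  ⟨a + (∑ i ∈ Finset.univ.filter (· < j), n i) + x, by
    have := offset_lt_sum n j x x.2; omega⟩

theorem univ_subset_union_iUnion_range_blockEmb (a : ℕ) {k : ℕ} (n : Fin k → ℕ) :
    univ ⊆ {t : Fin (a + ∑ j, n j) | (t : ℕ) < a} ∪ ⋃ j, range (blockEmb a n j) := by
  intro t _
  by_cases ht : (t : ℕ) < a
  · exact Or.inl ht
  let s : Fin (∑ j, n j) := ⟨t - a, by omega⟩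
  obtain ⟨⟨j, x⟩, hjx⟩ := finSigmaFinEquiv.surjective s
  have hoff : (t : ℕ) - a = ∑ i : Fin j, n (Fin.castLE j.2.le i) + x := by
    rw [← finSigmaFinEquiv_apply ⟨j, x⟩, hjx]
  refine Or.inr (mem_iUnion.2 ⟨j, x, Fin.ext ?_⟩)
  simp only [blockEmb, Fin.sum_filter_lt_eq_sum_castLE]
  omega

theorem Submodule.two_mul_projDim_lt_three_mul_le {K : Type*} [Field K] {N : ℕ}
    (V : Submodule K (Fin N → K)) (m : ℕ) :
    2 * V.projDim {t | (t : ℕ) < 3 * m}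
      ≤ V.projDim {t | (t : ℕ) < 2 * m} + V.projDim {t | m ≤ (t : ℕ) ∧ (t : ℕ) < 3 * m}
        + V.projDim {t | (t : ℕ) < m ∨ 2 * m ≤ (t : ℕ) ∧ (t : ℕ) < 3 * m} :=
  V.projDim_two_mul_le fun t (ht : (t : ℕ) < 3 * m) => by
    simp only [mem_union, mem_inter_iff, mem_ofPred_eq]
    omega

/-- Lemma 3: in `ℝ^h`, `h = 3m + n₁ + … + n_k`, if the three `2m`-coordinate
projections of `V` have dimension at most `2r` and each block projection `p_j` has
dimension at most `q j`, then `dim V ≤ 3r + q₁ + … + q_k`. -/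
theorem stmt_6 (m r k : ℕ) (n q : Fin k → ℕ)
    (V : Submodule ℝ (Fin (3 * m + ∑ j, n j) → ℝ))
    (h1 : Module.finrank ℝ (V.map (LinearMap.funLeft ℝ ℝ
      (fun i : Fin (2 * m) =>
        (⟨(i : ℕ), by have := i.2; omega⟩ : Fin (3 * m + ∑ j, n j))))) ≤ 2 * r)
    (h2 : Module.finrank ℝ (V.map (LinearMap.funLeft ℝ ℝ
      (fun i : Fin (2 * m) =>
        (⟨(i : ℕ) + m, by have := i.2; omega⟩ : Fin (3 * m + ∑ j, n j))))) ≤ 2 * r)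
    (h3 : Module.finrank ℝ (V.map (LinearMap.funLeft ℝ ℝ
      (fun i : Fin (2 * m) =>
        if (i : ℕ) < m then (⟨(i : ℕ), by have := i.2; omega⟩ : Fin (3 * m + ∑ j, n j))
        else (⟨(i : ℕ) + m, by have := i.2; omega⟩ : Fin (3 * m + ∑ j, n j))))) ≤ 2 * r)
    (hp : ∀ j : Fin k, Module.finrank ℝ (V.map (LinearMap.funLeft ℝ ℝ
      (fun x : Fin (n j) =>
        (⟨3 * m + (∑ i ∈ Finset.univ.filter (fun i : Fin k => i < j), n i) + (x : ℕ),
          by have := offset_lt_sum n j x x.2; omega⟩ : Fin (3 * m + ∑ j, n j))))) ≤ q j) :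
    Module.finrank ℝ V ≤ 3 * r + ∑ j, q j := by
  have hXY : V.projDim {t | (t : ℕ) < 2 * m} ≤ 2 * r := by
    refine (V.projDim_le_finrank_map_funLeft _ ?_).trans h1
    exact fun t ht => ⟨⟨t, ht⟩, rfl⟩
  have hYZ : V.projDim {t | m ≤ (t : ℕ) ∧ (t : ℕ) < 3 * m} ≤ 2 * r := by
    refine (V.projDim_le_finrank_map_funLeft _ ?_).trans h2
    rintro t ⟨hmt, ht⟩
    exact ⟨⟨t - m, by omega⟩, Fin.ext (Nat.sub_add_cancel hmt)⟩
  have hXZ : V.projDim {t | (t : ℕ) < m ∨ 2 * m ≤ (t : ℕ) ∧ (t : ℕ) < 3 * m} ≤ 2 * r := by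
    refine (V.projDim_le_finrank_map_funLeft _ ?_).trans h3
    rintro t (ht | ht)
    · exact ⟨⟨t, by omega⟩, by simp [ht]⟩
    · refine ⟨⟨t - m, by omega⟩, Fin.ext ?_⟩
      rw [apply_ite Fin.val, if_neg (show ¬(t : ℕ) - m < m by omega)]
      exact Nat.sub_add_cancel (by omega)
  have hlow := V.two_mul_projDim_lt_three_mul_le m
  have hblocks : ∀ j, V.projDim (range (blockEmb (3 * m) n j)) ≤ q j := fun j =>
    (V.projDim_le_finrank_map_funLeft _ subset_rfl).trans (hp j)
  calc finrank ℝ V = V.projDim univ := V.projDim_univ.symm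
    _ ≤ V.projDim {t | (t : ℕ) < 3 * m} + ∑ j, V.projDim (range (blockEmb (3 * m) n j)) :=
      (V.projDim_mono (univ_subset_union_iUnion_range_blockEmb _ n)).trans
        ((V.projDim_union_le _ _).trans (Nat.add_le_add_left (V.projDim_iUnion_le _) _))
    _ ≤ 3 * r + ∑ j, q j := add_le_add (by omega) (Finset.sum_le_sum fun j _ => hblocks j)
end

section
/- Let r be a positive natural number, let b, c ∈ ℝ^{2r} and let A be a 2r×2r real matrix. Then the function s ↦ det [[J̄_{2r} + sA, sc], [s bᵀ, 0]] (the determinant of the (2r+1)×(2r+1) matrix with top-left block J̄_{2r} + sA, last column s·c with bottom-right corner 0, and last row s·bᵀ) is a polynomial in s whose coefficients of degree 0 and degree 1 vanish and whose coefficient of degree 2 equals Σ_{i=1}^{r} (c_{2i} b_{2i−1} − c_{2i−1} b_{2i}). Equivalently, there is a polynomial q with det [[J̄_{2r} + sA, sc], [s bᵀ, 0]] = s²·(Σ_{i=1}^{r} (c_{2i} b_{2i−1} − c_{2i−1} b_{2i})) + s³·q(s) for all s. -/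
/-!
Multiplying the last row and the last column of `[[J̄ + sA, c], [bᵀ, 0]]` by `s` gives the matrix
of the theorem, so its determinant is `s²` times that of `[[J̄ + sA, c], [bᵀ, 0]]`, a polynomial in
`s` whose constant term is `det [[J̄, c], [bᵀ, 0]]`. Since `J̄⁻¹ = -J̄` and `det J̄ = 1`, the Schur
complement turns this constant term into `bᵀ J̄ c`, and `J̄` pairs the coordinates `2k` and `2k + 1`.
-/

open Matrix

open Polynomial

namespace Matrix

variable {m n R : Type*} [Fintype m] [Fintype n] [DecidableEq m] [DecidableEq n] [CommRing R]

theorem exists_det_add_smul_eq (B A : Matrix n n R) :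
    ∃ q : R[X], ∀ s : R, det (B + s • A) = det B + s * q.eval s := by
  set P : R[X] := det ((X : R[X]) • A.map C + B.map C)
  have hP : ∀ s, P.eval s = det (B + s • A) := fun s => by
    rw [← coe_evalRingHom, RingHom.map_det]
    congr 1
    ext i j
    simp [add_comm (B i j), mul_comm s]
  refine ⟨P.divX, fun s => ?_⟩
  have h := congr_arg (eval s) (X_mul_divX_add P)
  rw [eval_add, eval_mul, eval_X, eval_C, coeff_det_X_add_C_zero, hP] at h
  rw [← h, add_comm]

theorem det_fromBlocks_smul_smul_smul (M : Matrix m m R) (B : Matrix m n R) (C : Matrix n m R)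
    (D : Matrix n n R) (s : R) :
    det (fromBlocks M (s • B) (s • C) ((s * s) • D)) =
      s ^ (2 * Fintype.card n) * det (fromBlocks M B C D) := by
  set S : Matrix (m ⊕ n) (m ⊕ n) R := fromBlocks 1 0 0 (s • 1)
  have hS : det S = s ^ Fintype.card n := by simp [S, det_fromBlocks_zero₂₁]
  have hconj : fromBlocks M (s • B) (s • C) ((s * s) • D) = S * fromBlocks M B C D * S := by
    simp [S, fromBlocks_multiply, smul_smul]
  rw [hconj, det_mul, det_mul, hS]
  ring

theorem det_fromBlocks_replicateCol_replicateRow_zero (M : Matrix m m R) [Invertible M]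
    (b c : m → R) :
    det (fromBlocks M (replicateCol (Fin 1) c) (replicateRow (Fin 1) b) 0) =
      -(det M * (b ⬝ᵥ (⅟M *ᵥ c))) := by
  rw [det_fromBlocks₁₁, det_fin_one, Matrix.mul_assoc, ← replicateCol_mulVec]
  simp

end Matrix

def finTwoProdEquiv (r : ℕ) : Fin 2 × Fin r ≃ Fin (2 * r) :=
  (Equiv.prodComm _ _).trans (finProdFinEquiv.trans (finCongr (Nat.mul_comm r 2)))

@[simp]
theorem finTwoProdEquiv_apply_val (r : ℕ) (a : Fin 2) (k : Fin r) :
    (finTwoProdEquiv r (a, k) : ℕ) = a + 2 * k := by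
  simp [finTwoProdEquiv]

theorem finTwoProdEquiv_zero (r : ℕ) (k : Fin r) :
    finTwoProdEquiv r (0, k) = ⟨2 * k, by omega⟩ :=
  Fin.ext (by simp)

theorem finTwoProdEquiv_one (r : ℕ) (k : Fin r) :
    finTwoProdEquiv r (1, k) = ⟨2 * k + 1, by omega⟩ :=
  Fin.ext (by simp [add_comm])

theorem Jbar_submatrix_finTwoProdEquiv (r : ℕ) :
    (Jbar r).submatrix (finTwoProdEquiv r) (finTwoProdEquiv r) =
      blockDiagonal fun _ : Fin r => Jmat := by
  ext ⟨a, k⟩ ⟨a', k'⟩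
  have hdiv : ∀ (a : Fin 2) (k : Fin r), ((a : ℕ) + 2 * k) / 2 = k := fun a k => by omega
  have hmod : ∀ a : Fin 2, (⟨(a : ℕ) % 2, by omega⟩ : Fin 2) = a :=
    fun a => Fin.ext (Nat.mod_eq_of_lt a.2)
  simp [Jbar, blockDiagonal_apply, hdiv, hmod, Fin.val_inj]

theorem Jbar_eq_submatrix (r : ℕ) :
    Jbar r = (blockDiagonal fun _ : Fin r => Jmat).submatrix
      (finTwoProdEquiv r).symm (finTwoProdEquiv r).symm := by
  rw [← Jbar_submatrix_finTwoProdEquiv, submatrix_submatrix]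
  simp

theorem Jmat_mul_self : Jmat * Jmat = -1 := by
  ext i j
  fin_cases i <;> fin_cases j <;> simp [Jmat]

theorem det_Jmat : det Jmat = 1 := by
  simp [Jmat, det_fin_two_of]

theorem Jbar_mul_self (r : ℕ) : Jbar r * Jbar r = -1 := by
  rw [Jbar_eq_submatrix, submatrix_mul_equiv, ← blockDiagonal_mul]
  have hblock : (fun _ : Fin r => Jmat * Jmat) = -1 := funext fun _ => Jmat_mul_self
  rw [hblock, blockDiagonal_neg, blockDiagonal_one]
  exact congrArg Neg.neg (submatrix_one_equiv _)

theorem det_Jbar (r : ℕ) : det (Jbar r) = 1 := by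
  rw [Jbar_eq_submatrix, det_submatrix_equiv_self, det_blockDiagonal]
  simp [det_Jmat]

instance (r : ℕ) : Invertible (Jbar r) :=
  ⟨-Jbar r, by rw [Matrix.neg_mul, Jbar_mul_self, neg_neg],
    by rw [Matrix.mul_neg, Jbar_mul_self, neg_neg]⟩

theorem invOf_Jbar (r : ℕ) : ⅟(Jbar r) = -Jbar r := rfl

theorem dotProduct_Jbar_mulVec (r : ℕ) (b c : Fin (2 * r) → ℝ) :
    b ⬝ᵥ (Jbar r *ᵥ c) = ∑ k : Fin r,
      (b ⟨2 * k, by omega⟩ * c ⟨2 * k + 1, by omega⟩ -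
        b ⟨2 * k + 1, by omega⟩ * c ⟨2 * k, by omega⟩) := by
  rw [Jbar_eq_submatrix, submatrix_mulVec_equiv, dotProduct_comp_equiv_symm]
  simp [dotProduct, mulVec, blockDiagonal_apply, Fintype.sum_prod_type, Jmat, Fin.sum_univ_two,
    sub_eq_add_neg, Finset.sum_add_distrib, finTwoProdEquiv_zero, finTwoProdEquiv_one]

theorem det_fromBlocks_Jbar (r : ℕ) (b c : Fin (2 * r) → ℝ) :
    det (fromBlocks (Jbar r) (replicateCol (Fin 1) c) (replicateRow (Fin 1) b) 0) =
      ∑ k : Fin r,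
        (c ⟨2 * k + 1, by omega⟩ * b ⟨2 * k, by omega⟩ -
          c ⟨2 * k, by omega⟩ * b ⟨2 * k + 1, by omega⟩) := by
  rw [det_fromBlocks_replicateCol_replicateRow_zero, det_Jbar, invOf_Jbar, neg_mulVec,
    dotProduct_neg, dotProduct_Jbar_mulVec]
  simp only [one_mul, neg_neg, mul_comm (c _)]

/-- Corollary: `s ↦ det [[J̄₂ᵣ + sA, sc], [sbᵀ, 0]]` is a polynomial in `s`
of the form `s² · Σᵢ (c_{2i} b_{2i-1} - c_{2i-1} b_{2i}) + s³ · q(s)`. -/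
theorem stmt_8 (r : ℕ) (b c : Fin (2 * r) → ℝ)
    (A : Matrix (Fin (2 * r)) (Fin (2 * r)) ℝ) :
    ∃ q : Polynomial ℝ, ∀ s : ℝ,
      ((Matrix.fromBlocks (Jbar r + s • A) (Matrix.of fun i (_ : Fin 1) => s * c i)
          (Matrix.of fun (_ : Fin 1) j => s * b j) 0).reindex finSumFinEquiv finSumFinEquiv).det =
        s ^ 2 * (∑ i : Fin r,
          (c ⟨2 * (i : ℕ) + 1, by have := i.2; omega⟩ * b ⟨2 * (i : ℕ), by have := i.2; omega⟩ -
           c ⟨2 * (i : ℕ), by have := i.2; omega⟩ * b ⟨2 * (i : ℕ) + 1, by have := i.2; omega⟩))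
        + s ^ 3 * q.eval s := by
  set col := replicateCol (Fin 1) c
  set row := replicateRow (Fin 1) b
  obtain ⟨q, hq⟩ := exists_det_add_smul_eq (fromBlocks (Jbar r) col row 0) (fromBlocks A 0 0 0)
  refine ⟨q, fun s => ?_⟩
  have hsplit : fromBlocks (Jbar r + s • A) col row 0 =
      fromBlocks (Jbar r) col row 0 + s • fromBlocks A 0 0 0 := by
    simp [fromBlocks_smul, fromBlocks_add]
  have hscale := det_fromBlocks_smul_smul_smul (Jbar r + s • A) col row 0 s
  rw [smul_zero] at hscale
  have hcol : (of fun i (_ : Fin 1) => s * c i) = s • col := rfl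
  have hrow : (of fun (_ : Fin 1) j => s * b j) = s • row := rfl
  rw [det_reindex_self, hcol, hrow, hscale, hsplit, hq, det_fromBlocks_Jbar, Fintype.card_fin]
  ring
end

section
/- Let r be a natural number with r ≥ 1, let l₁, …, l_r ∈ ℝ, and let A_{i,j} (for 1 ≤ i < j ≤ r) be antipinco 2×2 real matrices. Set B = T(l₁,…,l_r) + R(A_{i,j}). Then the 2r×2r matrix −J̄_{2r}·B is symmetric, and its diagonal entries are l₁, l₁, l₂, l₂, …, l_r, l_r. -/
open Matrix

/-- A 2×2 real matrix is *antipinco* if it has the form `[[a,b],[-b,a]]`. -/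
def IsAntipinco (P : Matrix (Fin 2) (Fin 2) ℝ) : Prop :=
  ∃ a b : ℝ, P = !![a, b; -b, a]

/-- The `2r × 2r` block-diagonal matrix with diagonal blocks `l₁ J, …, l_r J`. -/
def Tmat {r : ℕ} (l : Fin r → ℝ) : Matrix (Fin (2 * r)) (Fin (2 * r)) ℝ :=
  Matrix.of fun i j =>
    if (i : ℕ) / 2 = (j : ℕ) / 2 then
      l ⟨(i : ℕ) / 2, by have := i.2; omega⟩ *
        Jmat ⟨(i : ℕ) % 2, by omega⟩ ⟨(j : ℕ) % 2, by omega⟩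
    else 0

lemma Jmat_apply (a b : ℕ) (ha : a < 2) (hb : b < 2) :
    Jmat ⟨a, ha⟩ ⟨b, hb⟩ = if a = 0 ∧ b = 1 then 1 else if a = 1 ∧ b = 0 then -1 else 0 := by
  interval_cases a <;> interval_cases b <;> simp [Jmat]

def pflip {r : ℕ} (x : Fin (2 * r)) : Fin (2 * r) :=
  ⟨if x.val % 2 = 0 then x.val + 1 else x.val - 1, by have := x.2; split <;> omega⟩

lemma flip_div {r : ℕ} (x : Fin (2 * r)) : (pflip x).val / 2 = x.val / 2 := by
  simp only [pflip]; split <;> omega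

lemma flip_mod {r : ℕ} (x : Fin (2 * r)) : (pflip x).val % 2 = 1 - x.val % 2 := by
  simp only [pflip]; split <;> omega

lemma entry (r : ℕ) (B : Matrix (Fin (2 * r)) (Fin (2 * r)) ℝ) (x y : Fin (2 * r)) :
    ((-(Jbar r)) * B) x y = (if x.val % 2 = 0 then -1 else 1) * B (pflip x) y := by
  rw [Matrix.mul_apply]
  rw [Finset.sum_eq_single (pflip x)]
  · simp only [Matrix.neg_apply, Jbar, Matrix.of_apply, flip_div, if_pos rfl, Jmat_apply,
      flip_mod]
    rcases Nat.mod_two_eq_zero_or_one x.val with h | h <;> simp [h]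
  · intro k _ hk
    simp only [Matrix.neg_apply, Jbar, Matrix.of_apply]
    split
    next hsame =>
      rw [Jmat_apply]
      have hk' : k.val ≠ (pflip x).val := fun h => hk (Fin.ext h)
      simp only [pflip, Fin.val_mk] at hk'
      have : ¬ (x.val % 2 = 0 ∧ k.val % 2 = 1) ∧ ¬ (x.val % 2 = 1 ∧ k.val % 2 = 0) := by
        constructor <;> rintro ⟨h1, h2⟩ <;> [skip; skip] <;>
          · apply hk'; split <;> omega
      simp [this.1, this.2]
    · simp
  · intro h; exact absurd (Finset.mem_univ _) h

lemma ap_apply (a b : ℝ) (i j : ℕ) (hi : i < 2) (hj : j < 2) :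
    (!![a, b; -b, a] : Matrix (Fin 2) (Fin 2) ℝ) ⟨i, hi⟩ ⟨j, hj⟩ =
      if i = 0 then (if j = 0 then a else b) else (if j = 0 then -b else a) := by
  interval_cases i <;> interval_cases j <;> simp

/-- if the `A i j` (for `i < j`) are antipinco, then for
`B = T(l₁,…,l_r) + R(A)` the matrix `-J̄₂ᵣ * B` is symmetric with diagonal entries
`l₁, l₁, l₂, l₂, …, l_r, l_r`. -/
theorem stmt_12 (r : ℕ) (hr : 1 ≤ r) (l : Fin r → ℝ)
    (A : Fin r → Fin r → Matrix (Fin 2) (Fin 2) ℝ)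
    (hA : ∀ i j : Fin r, i < j → IsAntipinco (A i j)) :
    (-(Jbar r) * (Tmat l + Rblock A)).IsSymm ∧
    ∀ i : Fin (2 * r),
      (-(Jbar r) * (Tmat l + Rblock A)) i i = l ⟨(i : ℕ) / 2, by have := i.2; omega⟩ := by
  have key : ∀ x y : Fin (2 * r), (x : ℕ) / 2 ≤ (y : ℕ) / 2 →
      (-(Jbar r) * (Tmat l + Rblock A)) x y = (-(Jbar r) * (Tmat l + Rblock A)) y x := by
    intro x y hxy
    rcases eq_or_lt_of_le hxy with heq | hlt
    · rw [entry, entry]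
      simp only [Matrix.add_apply, Tmat, Rblock, Matrix.of_apply, flip_div, flip_mod]
      rcases Nat.mod_two_eq_zero_or_one x.val with hx | hx <;>
        rcases Nat.mod_two_eq_zero_or_one y.val with hy | hy <;>
        · simp only [hx, hy, heq, lt_self_iff_false, dite_false, Jmat_apply]
          try norm_num
    · obtain ⟨a, b, hab⟩ := hA ⟨(x : ℕ) / 2, by have := x.2; omega⟩
        ⟨(y : ℕ) / 2, by have := y.2; omega⟩ (by simpa [Fin.mk_lt_mk] using hlt)
      rw [entry, entry]
      simp only [Matrix.add_apply, Tmat, Rblock, Matrix.of_apply, flip_div, flip_mod]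
      have h1 : ¬ ((x : ℕ) / 2 = (y : ℕ) / 2) := by omega
      have h2 : ¬ ((y : ℕ) / 2 = (x : ℕ) / 2) := by omega
      have h3 : ¬ ((y : ℕ) / 2 < (x : ℕ) / 2) := by omega
      simp only [if_neg h1, if_neg h2, dif_pos hlt, dif_neg h3, hab]
      rcases Nat.mod_two_eq_zero_or_one x.val with hx | hx <;>
        rcases Nat.mod_two_eq_zero_or_one y.val with hy | hy <;>
        · simp only [hx, hy, ap_apply]
          try norm_num
  refine ⟨?_, ?_⟩
  · rw [Matrix.IsSymm]
    ext x y
    rw [Matrix.transpose_apply]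
    rcases le_total ((x : ℕ) / 2) ((y : ℕ) / 2) with h | h
    · exact (key x y h).symm
    · exact key y x h
  · intro i
    rw [entry]
    simp only [Matrix.add_apply, Tmat, Rblock, Matrix.of_apply, flip_div, flip_mod]
    rcases Nat.mod_two_eq_zero_or_one i.val with hi | hi <;>
      · simp only [hi, lt_self_iff_false, dite_false, Jmat_apply]
        norm_num
end

section
/- Let n, r be natural numbers with r odd and 1 ≤ r ≤ n. Then the maximal dimension of a linear subspace of the complex symmetric n×n matrices in which every nonzero matrix has rank r equals 1. That is: there exists such a subspace of dimension 1, and every linear subspace of complex symmetric n×n matrices in which every nonzero matrix has rank r has dimension at most 1. -/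
/-!
Let `A, B` be independent symmetric matrices such that every `A + t • B` has rank `r`, and
let `p f g = det (A + X • B)[f, g]` be the `r × r` minors of the pencil, polynomials of
degree `≤ r`. Factoring each `A + t • B` through `Kʳ` gives
`p f g * p f' g' = p f g' * p f' g`, and symmetry turns this into `p f g ^ 2 = p f f * p g g`.
A nonzero `r × r` minor of `B` makes some `p f f` of degree exactly `r`; as `r` is odd, it has
a root `c` of odd multiplicity. Comparing multiplicities at `c` in the identity, every nonzero
`p g g` has odd multiplicity there and then every `p f g` vanishes at `c`, so
`rank (A + c • B) < r`.
-/

open Matrix Polynomial Module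

section Rank

variable {K : Type*} [Field K] {m n : Type*} [Fintype n]

lemma exists_eq_mul_of_rank_le {M : Matrix m n K} {r : ℕ} (h : M.rank ≤ r) :
    ∃ (P : Matrix m (Fin r) K) (Q : Matrix (Fin r) n K), M = P * Q := by
  classical
  set W := LinearMap.range M.mulVecLin
  let σ : (Fin r → K) →ₗ[K] W :=
    (finBasis K W).equivFun.symm.toLinearMap ∘ₗ LinearMap.funLeft K K (Fin.castLE h)
  have hσ : LinearMap.range σ = ⊤ := LinearMap.range_eq_top.mpr <|
    (finBasis K W).equivFun.symm.surjective.comp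
      (LinearMap.funLeft_surjective_of_injective _ _ _ (Fin.castLE_injective h))
  obtain ⟨τ, hτ⟩ := σ.exists_rightInverse_of_surjective hσ
  refine ⟨LinearMap.toMatrix' (W.subtype ∘ₗ σ),
    LinearMap.toMatrix' (τ ∘ₗ M.mulVecLin.rangeRestrict), ?_⟩
  have hM : (W.subtype ∘ₗ σ) ∘ₗ τ ∘ₗ M.mulVecLin.rangeRestrict = M.mulVecLin :=
    LinearMap.ext fun x => congrArg Subtype.val (LinearMap.congr_fun hτ _)
  rw [← LinearMap.toMatrix'_comp, hM]
  exact (LinearMap.toMatrix'_toLin' M).symm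

lemma det_submatrix_mul_det_submatrix_of_rank_le {M : Matrix m n K} {r : ℕ}
    (h : M.rank ≤ r) (f f' : Fin r → m) (g g' : Fin r → n) :
    (M.submatrix f g).det * (M.submatrix f' g').det =
      (M.submatrix f g').det * (M.submatrix f' g).det := by
  obtain ⟨P, Q, rfl⟩ := exists_eq_mul_of_rank_le h
  have key : ∀ f g,
      ((P * Q).submatrix f g).det = (P.submatrix f id).det * (Q.submatrix id g).det :=
    fun f g => by rw [← det_mul, submatrix_mul _ _ _ _ _ Function.bijective_id]
  simp only [key]
  ring

lemma exists_linearIndependent_comp_of_le_finrank_span {ι V : Type*} [Finite ι]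
    [AddCommGroup V] [Module K V] (v : ι → V) {r : ℕ}
    (h : r ≤ finrank K (Submodule.span K (Set.range v))) :
    ∃ g : Fin r → ι, LinearIndependent K (v ∘ g) := by
  obtain ⟨κ, a, ha, hspan, hli⟩ := exists_linearIndependent' K v
  have : Finite κ := Finite.of_injective a ha
  have : Fintype κ := Fintype.ofFinite κ
  rw [← hspan, finrank_span_eq_card hli] at h
  let e : Fin r ↪ κ := (Fin.castLEEmb h).trans (Fintype.equivFin κ).symm.toEmbedding
  exact ⟨a ∘ e, hli.comp e e.injective⟩

variable [Fintype m]

lemma exists_linearIndependent_row_submatrix {M : Matrix m n K} {r : ℕ} (h : r ≤ M.rank) :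
    ∃ f : Fin r → m, LinearIndependent K (M.submatrix f id).row := by
  rw [rank_eq_finrank_span_row] at h
  exact exists_linearIndependent_comp_of_le_finrank_span M.row h

lemma exists_det_submatrix_ne_zero_of_le_rank {M : Matrix m n K} {r : ℕ} (h : r ≤ M.rank) :
    ∃ (f : Fin r → m) (g : Fin r → n), (M.submatrix f g).det ≠ 0 := by
  obtain ⟨g, hg⟩ :=
    exists_linearIndependent_row_submatrix (M := Mᵀ) (r := r) (by rwa [rank_transpose])
  have hN : r ≤ (M.submatrix id g).rank := by
    rw [← rank_transpose, transpose_submatrix, hg.rank_matrix, Fintype.card_fin]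
  obtain ⟨f, hf⟩ := exists_linearIndependent_row_submatrix hN
  exact ⟨f, g, ((isUnit_iff_isUnit_det _).mp (linearIndependent_rows_iff_isUnit.mp hf)).ne_zero⟩

end Rank

namespace Polynomial

variable {R : Type*} [CommRing R] [IsDomain R]

lemma two_mul_rootMultiplicity_of_mul_self_eq_mul {q a b : R[X]} (h : q * q = a * b) (hq : q ≠ 0)
    (c : R) : 2 * q.rootMultiplicity c = a.rootMultiplicity c + b.rootMultiplicity c := by
  have hab : a * b ≠ 0 := h ▸ mul_ne_zero hq hq
  rw [two_mul, ← rootMultiplicity_mul (mul_ne_zero hq hq), h, rootMultiplicity_mul hab]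

lemma isRoot_of_mul_self_eq_mul_of_odd_rootMultiplicity {ι : Type*} (p : ι → ι → R[X])
    (hp : ∀ i j, p i j * p i j = p i i * p j j) {i₀ : ι} {c : R} (h₀ : p i₀ i₀ ≠ 0)
    (hodd : Odd ((p i₀ i₀).rootMultiplicity c)) (i j : ι) : (p i j).IsRoot c := by
  have hdiag : ∀ i, p i i ≠ 0 → Odd ((p i i).rootMultiplicity c) := by
    intro i hi
    have hne : p i i₀ ≠ 0 := fun h0 => mul_ne_zero hi h₀ (by rw [← hp, h0, zero_mul])
    have := two_mul_rootMultiplicity_of_mul_self_eq_mul (hp i i₀) hne c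
    rw [Nat.odd_iff] at hodd ⊢
    omega
  by_cases hij : p i j = 0
  · simp [hij]
  have hii : p i i ≠ 0 := fun h0 => mul_ne_zero hij hij (by rw [hp, h0, zero_mul])
  have hjj : p j j ≠ 0 := fun h0 => mul_ne_zero hij hij (by rw [hp, h0, mul_zero])
  have := two_mul_rootMultiplicity_of_mul_self_eq_mul (hp i j) hij c
  obtain ⟨s, hs⟩ := hdiag i hii
  obtain ⟨t, ht⟩ := hdiag j hjj
  exact (rootMultiplicity_pos hij).mp (by omega)

lemma exists_odd_rootMultiplicity {K : Type*} [Field K] [IsAlgClosed K] {p : K[X]}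
    (hp : Odd p.natDegree) : ∃ c, Odd (p.rootMultiplicity c) := by
  classical
  by_contra! h
  simp only [Nat.not_odd_iff_even] at h
  rw [← IsAlgClosed.card_roots_eq_natDegree, ← Multiset.toFinset_sum_count_eq] at hp
  simp only [count_roots] at hp
  exact Nat.not_even_iff_odd.mpr hp (Finset.even_sum _ fun c _ => h c)

end Polynomial

section Pencil

variable {R : Type*} [CommRing R] {m n : Type*} {r : ℕ}

noncomputable def pencilMinor (A B : Matrix m n R) (f : Fin r → m) (g : Fin r → n) : R[X] :=
  det ((X : R[X]) • (B.submatrix f g).map C + (A.submatrix f g).map C)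

variable (A B : Matrix m n R) (f : Fin r → m) (g : Fin r → n)

lemma natDegree_pencilMinor_le : (pencilMinor A B f g).natDegree ≤ r :=
  (natDegree_det_X_add_C_le _ _).trans_eq (Fintype.card_fin r)

lemma coeff_pencilMinor : (pencilMinor A B f g).coeff r = (B.submatrix f g).det := by
  have := coeff_det_X_add_C_card (B.submatrix f g) (A.submatrix f g)
  rwa [Fintype.card_fin] at this

lemma eval_pencilMinor (c : R) :
    (pencilMinor A B f g).eval c = ((A + c • B).submatrix f g).det := by
  rw [pencilMinor, ← coe_evalRingHom, RingHom.map_det]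
  congr 1
  ext i j
  simp only [RingHom.mapMatrix_apply, coe_evalRingHom, map_apply, Matrix.add_apply,
    Matrix.smul_apply, submatrix_apply, smul_eq_mul, X_mul_C, eval_add, eval_mul, eval_C, eval_X]
  ring

lemma pencilMinor_comm {A B : Matrix m m R} (hA : A.IsSymm) (hB : B.IsSymm) (f g : Fin r → m) :
    pencilMinor A B f g = pencilMinor A B g f := by
  rw [pencilMinor, ← det_transpose, transpose_add, transpose_smul, ← transpose_map,
    ← transpose_map, transpose_submatrix, transpose_submatrix, hA.eq, hB.eq, pencilMinor]

lemma pencilMinor_mul_pencilMinor {K : Type*} [Field K] [Infinite K] [Fintype n]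
    {A B : Matrix m n K} (h : ∀ c : K, (A + c • B).rank ≤ r)
    (f f' : Fin r → m) (g g' : Fin r → n) :
    pencilMinor A B f g * pencilMinor A B f' g' = pencilMinor A B f g' * pencilMinor A B f' g :=
  Polynomial.funext fun c => by
    simpa only [eval_mul, eval_pencilMinor] using
      det_submatrix_mul_det_submatrix_of_rank_le (h c) f f' g g'

end Pencil

variable {K : Type*} [Field K] {m : Type*} [Fintype m]

lemma exists_rank_add_smul_lt [IsAlgClosed K] {A B : Matrix m m K}
    (hA : A.IsSymm) (hB : B.IsSymm) {r : ℕ} (hr : Odd r) (hBr : r ≤ B.rank)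
    (h : ∀ c : K, (A + c • B).rank ≤ r) :
    ∃ c : K, (A + c • B).rank < r := by
  have hsq : ∀ f g : Fin r → m,
      pencilMinor A B f g * pencilMinor A B f g = pencilMinor A B f f * pencilMinor A B g g :=
    fun f g => by rw [← pencilMinor_mul_pencilMinor h f g g f, pencilMinor_comm hA hB g f]
  obtain ⟨f, g, hfg⟩ := exists_det_submatrix_ne_zero_of_le_rank hBr
  rw [← coeff_pencilMinor A B] at hfg
  have hfg_ne : pencilMinor A B f g ≠ 0 := fun h0 => hfg (by rw [h0, coeff_zero])
  have hff_gg : pencilMinor A B f f * pencilMinor A B g g ≠ 0 :=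
    hsq f g ▸ mul_ne_zero hfg_ne hfg_ne
  have hff_deg : (pencilMinor A B f f).natDegree = r := by
    have := congrArg natDegree (hsq f g)
    rw [natDegree_mul (left_ne_zero_of_mul hff_gg) (right_ne_zero_of_mul hff_gg),
      natDegree_mul hfg_ne hfg_ne,
      natDegree_eq_of_le_of_coeff_ne_zero (natDegree_pencilMinor_le A B f g) hfg] at this
    have := natDegree_pencilMinor_le A B f f
    have := natDegree_pencilMinor_le A B g g
    omega
  obtain ⟨c, hc⟩ := exists_odd_rootMultiplicity (hff_deg ▸ hr)
  refine ⟨c, lt_of_not_ge fun hrc => ?_⟩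
  obtain ⟨f', g', hne⟩ := exists_det_submatrix_ne_zero_of_le_rank hrc
  rw [← eval_pencilMinor] at hne
  exact hne <| isRoot_of_mul_self_eq_mul_of_odd_rootMultiplicity _ hsq
    (left_ne_zero_of_mul hff_gg) hc f' g'

lemma finrank_le_one_of_forall_rank_eq [IsAlgClosed K] {L : Submodule K (Matrix m m K)} {r : ℕ}
    (hr : Odd r) (hsymm : ∀ A ∈ L, A.IsSymm) (hrank : ∀ A ∈ L, A ≠ 0 → A.rank = r) :
    finrank K L ≤ 1 := by
  by_contra! h2
  obtain ⟨v, hv⟩ := exists_linearIndependent_of_le_finrank h2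
  obtain ⟨hB, hAB⟩ := linearIndependent_fin2.mp (hv.map' L.subtype L.ker_subtype)
  have hpencil : ∀ c : K, ((v 0 : Matrix m m K) + c • (v 1 : Matrix m m K)).rank = r := fun c =>
    hrank _ (L.add_mem (v 0).2 (L.smul_mem c (v 1).2)) fun h0 =>
      hAB (-c) (by rw [neg_smul]; exact (eq_neg_of_add_eq_zero_left h0).symm)
  obtain ⟨c, hc⟩ := exists_rank_add_smul_lt (hsymm _ (v 0).2) (hsymm _ (v 1).2) hr
    (hrank _ (v 1).2 hB).ge fun c => (hpencil c).le
  exact hc.ne (hpencil c)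

/-- for `r` odd with `1 ≤ r ≤ n`, the maximal dimension of a linear
subspace of the complex symmetric `n × n` matrices in which every nonzero matrix has
rank `r` equals `1`. -/
theorem stmt_16 (n r : ℕ) (hrodd : Odd r) (hr : 1 ≤ r) (hrn : r ≤ n) :
    (∃ L : Submodule ℂ (Matrix (Fin n) (Fin n) ℂ),
      (∀ A ∈ L, A.IsSymm) ∧ (∀ A ∈ L, A ≠ 0 → A.rank = r) ∧
      Module.finrank ℂ L = 1) ∧
    (∀ L : Submodule ℂ (Matrix (Fin n) (Fin n) ℂ),
      (∀ A ∈ L, A.IsSymm) → (∀ A ∈ L, A ≠ 0 → A.rank = r) →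
      Module.finrank ℂ L ≤ 1) := by
  refine ⟨?_, fun L hsymm hrank => finrank_le_one_of_forall_rank_eq hrodd hsymm hrank⟩
  set D : Matrix (Fin n) (Fin n) ℂ := diagonal fun i => if (i : ℕ) < r then 1 else 0
  have hD : D.rank = r := by
    rw [rank_diagonal, Fintype.card_subtype]
    simp [Fin.card_filter_val_lt, hrn]
  have hD0 : D ≠ 0 := fun h0 => by rw [h0, rank_zero] at hD; omega
  refine ⟨ℂ ∙ D, fun A hA => ?_, fun A hA hA0 => ?_, finrank_span_singleton hD0⟩
  all_goals obtain ⟨c, rfl⟩ := Submodule.mem_span_singleton.mp hA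
  · exact (isSymm_diagonal _).smul c
  · rw [rank_smul_of_mem_nonZeroDivisors _
      (mem_nonZeroDivisors_of_ne_zero (left_ne_zero_of_smul hA0)), hD]
end

section
/- (Rubei) Let n, r be natural numbers with r ≤ n. Then every nonempty affine subspace S of the real symmetric n×n matrices such that every matrix in S has rank r has dimension at most ⌊r/2⌋·(n − ⌊r/2⌋). -/
/-!
Pick `A ∈ S` and diagonalise it by an orthogonal congruence, so that `S` contains `diagonal d`.
Let `P` be the set of indices with `d i < 0`. If `B` is in the direction of `S` and its
`P × Pᶜ` block vanishes, then `diagonal d + t • B` is block diagonal for all `t`. Both blocks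
are symmetric, and the rank and the negative index of inertia of a symmetric matrix are lower
semicontinuous; since the total rank is constant, each block has constant rank and then
constant inertia. So the `P` block stays negative definite and the `Pᶜ` block positive
semidefinite for every `t`, which is only possible if both diagonal blocks of `B` vanish, i.e.
`B = 0`. Hence `B ↦ B.toBlock P Pᶜ` embeds the direction of `S` into `q × (n - q)` matrices,
`q` being the negative index of `A`. Applying this to `-S` as well, and using that the two
indices of `A` add up to `r`, the smaller of them is at most `r / 2`.
-/

open Topology Filter Module

section Semicontinuity

variable {X : Type*} [TopologicalSpace X]

lemma LowerSemicontinuous.eventually_le_nat {f : X → ℕ} (hf : LowerSemicontinuous f) (x : X) :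
    ∀ᶠ y in 𝓝 x, f x ≤ f y := by
  rcases Nat.eq_zero_or_pos (f x) with h | h
  · exact Eventually.of_forall fun y => h ▸ Nat.zero_le _
  · filter_upwards [hf x (f x - 1) (by omega)] with y hy
    omega

lemma eq_of_lowerSemicontinuous_of_add_eq [PreconnectedSpace X] {f g : X → ℕ}
    (hf : LowerSemicontinuous f) (hg : LowerSemicontinuous g) {c : ℕ} (hfg : ∀ x, f x + g x = c)
    (x y : X) : f x = f y := by
  refine IsLocallyConstant.apply_eq_of_preconnectedSpace ?_ x y
  refine (IsLocallyConstant.iff_eventually_eq f).2 fun x => ?_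
  filter_upwards [hf.eventually_le_nat x, hg.eventually_le_nat x] with y hfy hgy
  have := hfg x
  have := hfg y
  omega

end Semicontinuity

lemma finrank_iInf_ker_proj_compl {ι : Type*} [Fintype ι] (I : Set ι) [DecidablePred (· ∈ I)] :
    finrank ℝ ↥(⨅ i ∈ Iᶜ, LinearMap.ker (LinearMap.proj i : (ι → ℝ) →ₗ[ℝ] ℝ)) =
      Fintype.card I :=
  (LinearMap.iInfKerProjEquiv ℝ (fun _ => ℝ) disjoint_compl_right (by simp)).finrank_eq.trans
    (finrank_fintype_fun_eq_card ℝ)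

namespace Matrix

lemma IsSymm.toBlock_eq_zero_comm {m α : Type*} [Zero α] {M : Matrix m m α} (hM : M.IsSymm)
    {p q : m → Prop} (h : M.toBlock p q = 0) : M.toBlock q p = 0 := by
  ext i j
  simpa [hM.apply] using congrFun₂ h j i

lemma rank_neg {m n R : Type*} [Fintype n] [CommRing R] (A : Matrix m n R) :
    (-A).rank = A.rank := by
  simpa using rank_smul_of_mem_nonZeroDivisors A isUnit_one.neg.mem_nonZeroDivisors

section Rank

variable {m n K : Type*} [Fintype m] [Fintype n] [DecidableEq m] [DecidableEq n] [Field K]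

lemma rank_fromBlocks_zero_s18 (A : Matrix m m K) (D : Matrix n n K) :
    (fromBlocks A 0 0 D).rank = A.rank + D.rank := by
  let b := (Pi.basisFun K m).prod (Pi.basisFun K n)
  have hlin : toLin b b (fromBlocks A 0 0 D) = (toLin' A).prodMap (toLin' D) := by
    apply (LinearMap.toMatrix b b).injective
    rw [LinearMap.toMatrix_toLin, LinearMap.toMatrix_prodMap, LinearMap.toMatrix_eq_toMatrix',
      LinearMap.toMatrix_eq_toMatrix', LinearMap.toMatrix'_toLin', LinearMap.toMatrix'_toLin']
  let e : ↥((LinearMap.range (toLin' A)).prod (LinearMap.range (toLin' D))) ≃ₗ[K]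
      ↥(LinearMap.range (toLin' A)) × ↥(LinearMap.range (toLin' D)) :=
    { toFun := fun x => (⟨x.1.1, x.2.1⟩, ⟨x.1.2, x.2.2⟩)
      invFun := fun y => ⟨(y.1, y.2), y.1.2, y.2.2⟩
      map_add' := fun _ _ => rfl
      map_smul' := fun _ _ => rfl
      left_inv := fun _ => rfl
      right_inv := fun _ => rfl }
  rw [rank_eq_finrank_range_toLin _ b b, hlin, LinearMap.range_prodMap, e.finrank_eq,
    finrank_prod, rank_eq_finrank_range_toLin A (Pi.basisFun K m) (Pi.basisFun K m),
    rank_eq_finrank_range_toLin D (Pi.basisFun K n) (Pi.basisFun K n), toLin_eq_toLin',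
    toLin_eq_toLin']

lemma rank_eq_rank_toBlock_add_rank_toBlock {M : Matrix m m K} (P : m → Prop) [DecidablePred P]
    (h₁ : M.toBlock P (¬P ·) = 0) (h₂ : M.toBlock (¬P ·) P = 0) :
    M.rank = (M.toBlock P P).rank + (M.toBlock (¬P ·) (¬P ·)).rank := by
  rw [← rank_submatrix M (Equiv.sumCompl P) (Equiv.sumCompl P), ← rank_fromBlocks_zero_s18, ← h₁,
    ← h₂]
  congr 1
  ext (i | i) (j | j) <;> rfl

end Rank

variable {ι κ : Type*} [Fintype ι] [Fintype κ]

def NegDefOn (A : Matrix ι ι ℝ) (V : Submodule ℝ (ι → ℝ)) : Prop :=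
  ∀ x ∈ V, x ≠ 0 → x ⬝ᵥ A *ᵥ x < 0

/-- The negative index of inertia, defined intrinsically as the largest dimension of a subspace on
which `x ↦ x ⬝ᵥ A *ᵥ x` is negative definite. -/
noncomputable def negIndex (A : Matrix ι ι ℝ) : ℕ :=
  sSup {k | ∃ V : Submodule ℝ (ι → ℝ), A.NegDefOn V ∧ finrank ℝ V = k}

lemma bddAbove_negIndex_set (A : Matrix ι ι ℝ) :
    BddAbove {k | ∃ V : Submodule ℝ (ι → ℝ), A.NegDefOn V ∧ finrank ℝ V = k} :=
  ⟨Fintype.card ι, by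
    rintro _ ⟨V, -, rfl⟩
    simpa using V.finrank_le⟩

lemma finrank_le_negIndex {A : Matrix ι ι ℝ} {V : Submodule ℝ (ι → ℝ)} (hV : A.NegDefOn V) :
    finrank ℝ V ≤ A.negIndex :=
  le_csSup (bddAbove_negIndex_set A) ⟨V, hV, rfl⟩

lemma exists_negDefOn_finrank_eq_negIndex (A : Matrix ι ι ℝ) :
    ∃ V : Submodule ℝ (ι → ℝ), A.NegDefOn V ∧ finrank ℝ V = A.negIndex :=
  Nat.sSup_mem (s := {k | ∃ V : Submodule ℝ (ι → ℝ), A.NegDefOn V ∧ finrank ℝ V = k})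
    ⟨0, ⊥, fun _ hx hx0 => (hx0 ((Submodule.mem_bot ℝ).1 hx)).elim, finrank_bot ℝ _⟩
    (bddAbove_negIndex_set A)

lemma negIndex_add_finrank_le {A : Matrix ι ι ℝ} {W : Submodule ℝ (ι → ℝ)}
    (hW : ∀ x ∈ W, 0 ≤ x ⬝ᵥ A *ᵥ x) : A.negIndex + finrank ℝ W ≤ Fintype.card ι := by
  obtain ⟨V, hV, hVdim⟩ := A.exists_negDefOn_finrank_eq_negIndex
  have hVW : V ⊓ W = ⊥ := (Submodule.eq_bot_iff _).2 fun x ⟨hxV, hxW⟩ => by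
    by_contra hx0
    exact (hW x hxW).not_gt (hV x hxV hx0)
  have := Submodule.finrank_sup_add_finrank_inf_eq V W
  rw [hVW, finrank_bot, add_zero] at this
  simpa [← hVdim, ← this] using (V ⊔ W).finrank_le

lemma negIndex_eq_finrank_of_negDefOn {A : Matrix ι ι ℝ} {V W : Submodule ℝ (ι → ℝ)}
    (hV : A.NegDefOn V) (hW : ∀ x ∈ W, 0 ≤ x ⬝ᵥ A *ᵥ x)
    (hVW : finrank ℝ V + finrank ℝ W = Fintype.card ι) : A.negIndex = finrank ℝ V := by
  have := negIndex_add_finrank_le hW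
  exact le_antisymm (by omega) (finrank_le_negIndex hV)

lemma negIndex_le_of_injective {A : Matrix ι ι ℝ} {B : Matrix κ κ ℝ}
    {f : (ι → ℝ) →ₗ[ℝ] (κ → ℝ)} (hf : Function.Injective f)
    (hAB : ∀ x, x ⬝ᵥ A *ᵥ x = f x ⬝ᵥ B *ᵥ f x) : A.negIndex ≤ B.negIndex := by
  obtain ⟨V, hV, hVdim⟩ := A.exists_negDefOn_finrank_eq_negIndex
  have hfV : B.NegDefOn (V.map f) := by
    rintro _ ⟨x, hx, rfl⟩ hfx
    rw [← hAB]
    exact hV x hx fun h => hfx (by simp [h])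
  rw [← hVdim]
  exact (Submodule.equivMapOfInjective f hf V).finrank_eq.trans_le (finrank_le_negIndex hfV)

lemma negIndex_eq_of_linearEquiv {A : Matrix ι ι ℝ} {B : Matrix κ κ ℝ}
    (e : (ι → ℝ) ≃ₗ[ℝ] (κ → ℝ)) (hAB : ∀ x, x ⬝ᵥ A *ᵥ x = e x ⬝ᵥ B *ᵥ e x) :
    A.negIndex = B.negIndex :=
  le_antisymm (negIndex_le_of_injective e.injective hAB)
    (negIndex_le_of_injective e.symm.injective fun y => by simpa using (hAB (e.symm y)).symm)

lemma dotProduct_mulVec_nonneg_of_negIndex_eq_zero {A : Matrix ι ι ℝ} (hA : A.negIndex = 0)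
    (x : ι → ℝ) : 0 ≤ x ⬝ᵥ A *ᵥ x := by
  by_contra! hx
  have hx0 : x ≠ 0 := by rintro rfl; simp at hx
  have hspan : A.NegDefOn (ℝ ∙ x) := by
    rintro _ hy hy0
    obtain ⟨c, rfl⟩ := Submodule.mem_span_singleton.1 hy
    have hc : c ≠ 0 := by rintro rfl; simp at hy0
    have : c • x ⬝ᵥ A *ᵥ (c • x) = c ^ 2 * (x ⬝ᵥ A *ᵥ x) := by
      simp only [mulVec_smul, smul_dotProduct, dotProduct_smul, smul_eq_mul]; ring
    rw [this]
    exact mul_neg_of_pos_of_neg (pow_two_pos_of_ne_zero hc) hx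
  have := finrank_le_negIndex hspan
  rw [finrank_span_singleton hx0, hA] at this
  exact absurd this (by norm_num)

lemma NegDefOn.eventually_nhds {A : Matrix ι ι ℝ} {V : Submodule ℝ (ι → ℝ)} (hV : A.NegDefOn V) :
    ∀ᶠ B in 𝓝 A, B.NegDefOn V := by
  have hK : IsCompact ((V : Set (ι → ℝ)) ∩ Metric.sphere 0 1) :=
    (isCompact_sphere 0 1).inter_left V.closed_of_finiteDimensional
  have hq : Continuous fun p : Matrix ι ι ℝ × (ι → ℝ) => p.2 ⬝ᵥ p.1 *ᵥ p.2 :=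
    continuous_snd.dotProduct (continuous_fst.matrix_mulVec continuous_snd)
  have hsphere : ∀ᶠ B in 𝓝 A, ∀ y ∈ (V : Set (ι → ℝ)) ∩ Metric.sphere 0 1, y ⬝ᵥ B *ᵥ y < 0 :=
    hK.eventually_forall_of_forall_eventually fun y ⟨hyV, hy1⟩ =>
      (hq.tendsto (A, y)).eventually (eventually_lt_nhds
        (hV y hyV (ne_zero_of_mem_unit_sphere ⟨y, hy1⟩)))
  filter_upwards [hsphere] with B hB x hx hx0
  have hnorm : ‖x‖ ≠ 0 := norm_ne_zero_iff.2 hx0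
  have hy := hB (‖x‖⁻¹ • x) ⟨V.smul_mem _ hx, by simp [norm_smul, hnorm]⟩
  have hscale : (‖x‖⁻¹ • x) ⬝ᵥ B *ᵥ (‖x‖⁻¹ • x) = (‖x‖⁻¹) ^ 2 * (x ⬝ᵥ B *ᵥ x) := by
    simp only [mulVec_smul, smul_dotProduct, dotProduct_smul, smul_eq_mul]; ring
  rw [hscale] at hy
  exact neg_of_mul_neg_right hy (sq_nonneg _)

lemma lowerSemicontinuous_negIndex : LowerSemicontinuous (negIndex : Matrix ι ι ℝ → ℕ) := by
  intro A k hk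
  obtain ⟨V, hV, hVdim⟩ := A.exists_negDefOn_finrank_eq_negIndex
  filter_upwards [hV.eventually_nhds] with B hB
  exact hk.trans_le (hVdim ▸ finrank_le_negIndex hB)

variable [DecidableEq ι]

lemma negIndex_conjStarAlgAut (u : unitaryGroup ι ℝ) (A : Matrix ι ι ℝ) :
    (Unitary.conjStarAlgAut ℝ _ u A).negIndex = A.negIndex := by
  refine negIndex_eq_of_linearEquiv (UnitaryGroup.toLinearEquiv (star u)) fun x => ?_
  have hstar : (star u : Matrix ι ι ℝ) = (u : Matrix ι ι ℝ)ᵀ :=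
    conjTranspose_eq_transpose_of_trivial _
  have he : ∀ y, UnitaryGroup.toLinearEquiv (star u) y = y ᵥ* u := fun y => by
    rw [← mulVec_transpose, ← hstar]
    rfl
  simp only [Unitary.conjStarAlgAut_apply, he, ← mulVec_mulVec,
    dotProduct_mulVec x (u : Matrix ι ι ℝ), hstar, mulVec_transpose]

lemma rank_conjStarAlgAut (u : unitaryGroup ι ℝ) (A : Matrix ι ι ℝ) :
    (Unitary.conjStarAlgAut ℝ _ u A).rank = A.rank := by
  rw [Unitary.conjStarAlgAut_apply, ← Unitary.coe_star,
    rank_mul_eq_left_of_isUnit_det _ _ (UnitaryGroup.det_isUnit (star u)),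
    rank_mul_eq_right_of_isUnit_det _ _ (UnitaryGroup.det_isUnit u)]

lemma dotProduct_diagonal_mulVec_self (d x : ι → ℝ) :
    x ⬝ᵥ diagonal d *ᵥ x = ∑ i, d i * x i ^ 2 := by
  simp only [dotProduct, mulVec_diagonal]
  exact Finset.sum_congr rfl fun i _ => by ring

lemma negIndex_diagonal (d : ι → ℝ) : (diagonal d).negIndex = Fintype.card {i // d i < 0} := by
  classical
  set I : Set ι := {i | d i < 0}
  have hV : (diagonal d).NegDefOn (⨅ i ∈ Iᶜ, LinearMap.ker (LinearMap.proj i)) := by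
    intro x hx hx0
    simp only [Submodule.mem_iInf, LinearMap.mem_ker, LinearMap.proj_apply] at hx
    obtain ⟨i₀, hi₀⟩ := Function.ne_iff.1 hx0
    have hi₀I : i₀ ∈ I := by_contra fun h => hi₀ (hx i₀ h)
    rw [dotProduct_diagonal_mulVec_self]
    refine (Finset.sum_lt_sum (g := fun _ => 0) (fun i _ => ?_)
      ⟨i₀, Finset.mem_univ _, ?_⟩).trans_eq Finset.sum_const_zero
    · by_cases hi : i ∈ I
      · exact mul_nonpos_of_nonpos_of_nonneg (le_of_lt hi) (sq_nonneg _)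
      · simp [hx i hi]
    · exact mul_neg_of_neg_of_pos hi₀I (pow_two_pos_of_ne_zero hi₀)
  have hW : ∀ x ∈ ⨅ i ∈ Iᶜᶜ, LinearMap.ker (LinearMap.proj i : (ι → ℝ) →ₗ[ℝ] ℝ),
      0 ≤ x ⬝ᵥ diagonal d *ᵥ x := by
    intro x hx
    simp only [Submodule.mem_iInf, LinearMap.mem_ker, LinearMap.proj_apply] at hx
    rw [dotProduct_diagonal_mulVec_self]
    refine Finset.sum_nonneg fun i _ => ?_
    by_cases hi : i ∈ I
    · simp [hx i (not_not.2 hi)]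
    · exact mul_nonneg (le_of_not_gt hi) (sq_nonneg _)
  rw [negIndex_eq_finrank_of_negDefOn hV hW, finrank_iInf_ker_proj_compl]
  · rfl
  · rw [finrank_iInf_ker_proj_compl, finrank_iInf_ker_proj_compl, ← Fintype.card_sum]
    exact Fintype.card_congr (Equiv.Set.sumCompl I)

lemma rank_diagonal_eq_negIndex_add_negIndex_neg (d : ι → ℝ) :
    (diagonal d).rank = (diagonal d).negIndex + (-diagonal d).negIndex := by
  classical
  rw [rank_diagonal, negIndex_diagonal, diagonal_neg, negIndex_diagonal,
    ← Fintype.card_subtype_or_disjoint _ _ fun p hp hq i hi =>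
      (hp i hi).asymm (by simpa using hq i hi)]
  exact Fintype.card_congr (Equiv.subtypeEquivRight fun i => by rw [ne_iff_lt_or_gt, neg_lt_zero])

lemma rank_eq_negIndex_add_negIndex_neg {A : Matrix ι ι ℝ} (hA : A.IsSymm) :
    A.rank = A.negIndex + (-A).negIndex := by
  have hA' : A.IsHermitian := isHermitian_iff_isSymm.2 hA
  rw [hA'.spectral_theorem, ← map_neg, rank_conjStarAlgAut, negIndex_conjStarAlgAut,
    negIndex_conjStarAlgAut]
  exact rank_diagonal_eq_negIndex_add_negIndex_neg _

lemma eq_zero_of_isSymm_of_dotProduct_mulVec_self_eq_zero {B : Matrix ι ι ℝ} (hB : B.IsSymm)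
    (h : ∀ x, x ⬝ᵥ B *ᵥ x = 0) : B = 0 := by
  have hdiag : ∀ k, B k k = 0 := fun k => by
    simpa [mulVec_single_one, single_dotProduct] using h (Pi.single k 1)
  ext i j
  have := h (Pi.single i 1 + Pi.single j 1)
  simp only [mulVec_add, dotProduct_add, add_dotProduct, mulVec_single_one, single_dotProduct,
    col_apply, one_mul, hdiag, hB.apply i j] at this
  simpa using this

section Families

variable {X : Type*} [TopologicalSpace X] {A : X → Matrix ι ι ℝ}

lemma lowerSemicontinuous_rank_comp (hA : Continuous A) (hsym : ∀ x, (A x).IsSymm) :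
    LowerSemicontinuous fun x => (A x).rank := by
  simp_rw [rank_eq_negIndex_add_negIndex_neg (hsym _)]
  exact (lowerSemicontinuous_negIndex.comp hA).add (lowerSemicontinuous_negIndex.comp hA.neg)

lemma negIndex_eq_of_forall_rank_eq [PreconnectedSpace X] (hA : Continuous A)
    (hsym : ∀ x, (A x).IsSymm) {r : ℕ} (hrank : ∀ x, (A x).rank = r) (x y : X) :
    (A x).negIndex = (A y).negIndex :=
  eq_of_lowerSemicontinuous_of_add_eq (lowerSemicontinuous_negIndex.comp hA)
    (lowerSemicontinuous_negIndex.comp hA.neg)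
    (fun x => (hrank x ▸ rank_eq_negIndex_add_negIndex_neg (hsym x)).symm) x y

end Families

lemma eq_zero_of_forall_rank_add_smul_eq {C B : Matrix ι ι ℝ} (hC : C.IsSymm) (hB : B.IsSymm)
    (hC₀ : C.negIndex = 0) (hrank : ∀ t : ℝ, (C + t • B).rank = C.rank) : B = 0 := by
  have hline : ∀ t : ℝ, (C + t • B).negIndex = 0 := fun t => by
    simpa [hC₀] using negIndex_eq_of_forall_rank_eq (by fun_prop)
      (fun s : ℝ => hC.add (hB.smul s)) hrank t 0
  refine eq_zero_of_isSymm_of_dotProduct_mulVec_self_eq_zero hB fun x => ?_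
  -- `t ↦ x ⬝ᵥ (C + t • B) *ᵥ x` is affine and nonnegative, so its slope vanishes: otherwise it
  -- would take the value `-1`.
  by_contra hx
  have := dotProduct_mulVec_nonneg_of_negIndex_eq_zero
    (hline (-(x ⬝ᵥ C *ᵥ x + 1) / (x ⬝ᵥ B *ᵥ x))) x
  simp only [add_mulVec, smul_mulVec, dotProduct_add, dotProduct_smul, smul_eq_mul] at this
  field_simp at this
  linarith

lemma rank_toBlock_add_smul_eq {C B : Matrix ι ι ℝ} (P : ι → Prop) [DecidablePred P]
    (hC : C.IsSymm) (hB : B.IsSymm) (hCP : C.toBlock P (¬P ·) = 0) (hBP : B.toBlock P (¬P ·) = 0)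
    (hrank : ∀ t : ℝ, (C + t • B).rank = C.rank) (t : ℝ) :
    (C.toBlock P P + t • B.toBlock P P).rank = (C.toBlock P P).rank ∧
      (C.toBlock (¬P ·) (¬P ·) + t • B.toBlock (¬P ·) (¬P ·)).rank =
        (C.toBlock (¬P ·) (¬P ·)).rank := by
  have hsplit : ∀ s : ℝ, (C.toBlock P P + s • B.toBlock P P).rank +
      (C.toBlock (¬P ·) (¬P ·) + s • B.toBlock (¬P ·) (¬P ·)).rank = C.rank := fun s => by
    have hoff : (C + s • B).toBlock P (¬P ·) = 0 := by
      change C.toBlock P _ + s • B.toBlock P _ = 0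
      rw [hCP, hBP, smul_zero, add_zero]
    rw [← hrank s, rank_eq_rank_toBlock_add_rank_toBlock P hoff
      ((hC.add (hB.smul s)).toBlock_eq_zero_comm hoff)]
    rfl
  have hcont : ∀ (Q : ι → Prop), Continuous fun s : ℝ => C.toBlock Q Q + s • B.toBlock Q Q :=
    fun Q => by fun_prop
  have hsym : ∀ (Q : ι → Prop) (s : ℝ), (C.toBlock Q Q + s • B.toBlock Q Q).IsSymm :=
    fun Q s => (hC.submatrix _).add ((hB.submatrix _).smul s)
  have hP := eq_of_lowerSemicontinuous_of_add_eq
    (lowerSemicontinuous_rank_comp (hcont P) (hsym P))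
    (lowerSemicontinuous_rank_comp (hcont _) (hsym _)) hsplit t 0
  have h₀ := hsplit 0
  have ht := hsplit t
  simp only [zero_smul, add_zero] at hP h₀
  omega

lemma eq_zero_of_forall_rank_diagonal_add_smul_eq {d : ι → ℝ} {B : Matrix ι ι ℝ} (hB : B.IsSymm)
    (hBd : B.toBlock (d · < 0) (¬d · < 0) = 0)
    (hrank : ∀ t : ℝ, (diagonal d + t • B).rank = (diagonal d).rank) : B = 0 := by
  have hblocks := rank_toBlock_add_smul_eq (d · < 0) (isSymm_diagonal d) hB
    (toBlock_diagonal_disjoint d disjoint_compl_right) hBd hrank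
  have hneg : B.toBlock (d · < 0) (d · < 0) = 0 := by
    rw [← neg_eq_zero]
    refine eq_zero_of_forall_rank_add_smul_eq (C := -(diagonal d).toBlock (d · < 0) (d · < 0))
      ((isSymm_diagonal d).submatrix _).neg (hB.submatrix _).neg ?_ fun t => ?_
    · rw [toBlock_diagonal_self, diagonal_neg, negIndex_diagonal, Fintype.card_eq_zero_iff]
      exact ⟨fun i => by linarith [i.1.2, i.2]⟩
    · rw [smul_neg, ← neg_add, rank_neg, rank_neg]
      exact (hblocks t).1
  have hnonneg : B.toBlock (¬d · < 0) (¬d · < 0) = 0 := by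
    refine eq_zero_of_forall_rank_add_smul_eq (C := (diagonal d).toBlock (¬d · < 0) (¬d · < 0))
      ((isSymm_diagonal d).submatrix _) (hB.submatrix _) ?_ fun t => (hblocks t).2
    rw [toBlock_diagonal_self, negIndex_diagonal, Fintype.card_eq_zero_iff]
    exact ⟨fun i => i.1.2 i.2⟩
  ext i j
  by_cases hi : d i < 0 <;> by_cases hj : d j < 0
  · exact congrFun₂ hneg ⟨i, hi⟩ ⟨j, hj⟩
  · exact congrFun₂ hBd ⟨i, hi⟩ ⟨j, hj⟩
  · exact congrFun₂ (hB.toBlock_eq_zero_comm hBd) ⟨i, hi⟩ ⟨j, hj⟩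
  · exact congrFun₂ hnonneg ⟨i, hi⟩ ⟨j, hj⟩

end Matrix

open Matrix

variable {ι : Type*} [Fintype ι] [DecidableEq ι]

lemma finrank_direction_le_of_diagonal_mem {S : AffineSubspace ℝ (Matrix ι ι ℝ)} {d : ι → ℝ}
    (hd : diagonal d ∈ S) (hsym : ∀ A ∈ S, A.IsSymm) {r : ℕ} (hrank : ∀ A ∈ S, A.rank = r) :
    finrank ℝ S.direction ≤
      Fintype.card {i // d i < 0} * (Fintype.card ι - Fintype.card {i // d i < 0}) := by
  let offBlock : Matrix ι ι ℝ →ₗ[ℝ] Matrix {i // d i < 0} {i // ¬d i < 0} ℝ :=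
    { toFun := fun B => B.toBlock (d · < 0) (¬d · < 0)
      map_add' := fun _ _ => rfl
      map_smul' := fun _ _ => rfl }
  have hinj : Function.Injective (offBlock ∘ₗ S.direction.subtype) := by
    refine (injective_iff_map_eq_zero _).2 fun ⟨B, hB⟩ hB0 => Subtype.ext ?_
    have hline : ∀ t : ℝ, diagonal d + t • B ∈ S := fun t => by
      rw [add_comm]
      exact AffineSubspace.vadd_mem_of_mem_direction (S.direction.smul_mem t hB) hd
    have hBsym : B.IsSymm := by
      simpa using (hsym _ (hline 1)).sub (hsym _ hd)
    exact eq_zero_of_forall_rank_diagonal_add_smul_eq hBsym hB0 fun t => by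
      rw [hrank _ (hline t), hrank _ hd]
  calc finrank ℝ S.direction ≤ finrank ℝ (Matrix {i // d i < 0} {i // ¬d i < 0} ℝ) :=
        LinearMap.finrank_le_finrank_of_injective hinj
    _ = _ := by rw [finrank_matrix, Fintype.card_subtype_compl, finrank_self, mul_one]

lemma finrank_direction_le_negIndex_mul {S : AffineSubspace ℝ (Matrix ι ι ℝ)}
    {A : Matrix ι ι ℝ} (hA : A ∈ S) (hsym : ∀ B ∈ S, B.IsSymm) {r : ℕ}
    (hrank : ∀ B ∈ S, B.rank = r) :
    finrank ℝ S.direction ≤ A.negIndex * (Fintype.card ι - A.negIndex) := by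
  have hA' : A.IsHermitian := isHermitian_iff_isSymm.2 (hsym A hA)
  let φ := Unitary.conjStarAlgAut ℝ (Matrix ι ι ℝ) (star hA'.eigenvectorUnitary)
  have h := finrank_direction_le_of_diagonal_mem (S := S.map φ.toAlgEquiv.toLinearMap.toAffineMap)
    ⟨A, hA, hA'.conjStarAlgAut_star_eigenvectorUnitary⟩
    (by
      rintro _ ⟨B, hB, rfl⟩
      have hB' := (isHermitian_iff_isSymm.2 (hsym B hB)).isSelfAdjoint.map φ
      exact isHermitian_iff_isSymm.1 hB'.isHermitian)
    (by
      rintro _ ⟨B, hB, rfl⟩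
      exact (rank_conjStarAlgAut _ B).trans (hrank B hB))
  rwa [← negIndex_diagonal, ← hA'.conjStarAlgAut_star_eigenvectorUnitary, negIndex_conjStarAlgAut,
    AffineSubspace.map_direction, LinearMap.toAffineMap_linear,
    φ.toAlgEquiv.toLinearEquiv.finrank_map_eq] at h

lemma mul_sub_le_mul_sub_of_le_of_two_mul_le {a m n : ℕ} (ham : a ≤ m) (hmn : 2 * m ≤ n) :
    a * (n - a) ≤ m * (n - m) := by
  have h : n - a = (n - m) + (m - a) := by omega
  calc a * (n - a) = a * (n - m) + a * (m - a) := by rw [h, Nat.mul_add]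
    _ ≤ a * (n - m) + (n - m) * (m - a) :=
        Nat.add_le_add_left (Nat.mul_le_mul_right (m - a) (by omega)) _
    _ = (a + (m - a)) * (n - m) := by ring
    _ = m * (n - m) := by rw [Nat.add_sub_cancel' ham]

/-- Rubei: for `r ≤ n`, every nonempty affine subspace of the real
symmetric `n × n` matrices all of whose elements have rank `r` has dimension at most
`⌊r/2⌋ * (n - ⌊r/2⌋)`. -/
theorem stmt_18 (n r : ℕ) (hrn : r ≤ n)
    (S : AffineSubspace ℝ (Matrix (Fin n) (Fin n) ℝ))
    (hne : (S : Set (Matrix (Fin n) (Fin n) ℝ)).Nonempty)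
    (hsym : ∀ A ∈ S, A.IsSymm)
    (hrank : ∀ A ∈ S, A.rank = r) :
    Module.finrank ℝ S.direction ≤ (r / 2) * (n - r / 2) := by
  obtain ⟨A, hA⟩ := hne
  have hneg := finrank_direction_le_negIndex_mul hA hsym hrank
  have hpos := finrank_direction_le_negIndex_mul (A := -A)
    (S := S.map (LinearEquiv.neg ℝ).toLinearMap.toAffineMap) ⟨A, hA, rfl⟩
    (by rintro _ ⟨B, hB, rfl⟩; exact (hsym B hB).neg)
    (by rintro _ ⟨B, hB, rfl⟩; exact (rank_neg B).trans (hrank B hB))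
  rw [AffineSubspace.map_direction, LinearMap.toAffineMap_linear, LinearEquiv.finrank_map_eq]
    at hpos
  have hr : A.negIndex + (-A).negIndex = r := by
    rw [← rank_eq_negIndex_add_negIndex_neg (hsym A hA), hrank A hA]
  rw [Fintype.card_fin] at hneg hpos
  rcases le_total A.negIndex (-A).negIndex with h | h
  · exact hneg.trans (mul_sub_le_mul_sub_of_le_of_two_mul_le (by omega) (by omega))
  · exact hpos.trans (mul_sub_le_mul_sub_of_le_of_two_mul_le (by omega) (by omega))
end
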